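/- arXiv:2209.14720 — 9 statements merged into one kernel-verified Lean document; each statement's English description precedes it below -/
import Mathlib

section
/- Let m ≥ 4 be an integer. In ℝ^m with standard basis e_1,…,e_m, let Φ⁺ = {e_i − e_j : 1 ≤ i < j ≤ m} and let θ : ℝ^m → ℝ^m be the linear involution determined by the permutation σ = (1 m)(2 m−1), i.e. θ(e_i) = e_{σ(i)}. Then the sum of all α ∈ Φ⁺ with θ(α) ≠ α equals (m−1)(e_1 − e_m) + (m−3)(e_2 − e_{m−1}). -/
open scoped Classical BigOperators

/-- The `i`-th standard basis vector of `ℝ^m`. -/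
noncomputable def stdVec (m : ℕ) (i : Fin m) : Fin m → ℝ := Pi.single i 1

/-- The permutation `σ = (1 m)(2 m−1)` of the indices (0-based: swaps `0 ↔ m−1`
and `1 ↔ m−2`, fixing everything else). -/
def sigmaAIII (m : ℕ) (i : Fin m) : Fin m :=
  if (i : ℕ) = 0 ∨ (i : ℕ) = 1 ∨ (i : ℕ) = m - 1 ∨ (i : ℕ) = m - 2 then i.rev else i

/-- The linear involution `θ` of `ℝ^m` determined by `θ(e_i) = e_{σ(i)}`
for the involutive permutation `σ = (1 m)(2 m−1)`; concretely `(θ v) j = v (σ j)`. -/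
noncomputable def thetaAIII (m : ℕ) : (Fin m → ℝ) →ₗ[ℝ] (Fin m → ℝ) :=
  LinearMap.funLeft ℝ ℝ (sigmaAIII m)

private def Pbig (m : ℕ) (i : Fin m) : Prop :=
  (i : ℕ) = 0 ∨ (i : ℕ) = 1 ∨ (i : ℕ) = m - 1 ∨ (i : ℕ) = m - 2

private lemma sigma_ne_iff (m : ℕ) (hm : 4 ≤ m) (i : Fin m) :
    sigmaAIII m i ≠ i ↔ Pbig m i := by
  have hi := i.isLt
  unfold sigmaAIII Pbig
  split_ifs with h
  · simp only [ne_eq, Fin.ext_iff, Fin.val_rev]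
    constructor
    · intro _; exact h
    · intro _; omega
  · simpa using h

private lemma sigma_invol (m : ℕ) : Function.Involutive (sigmaAIII m) := by
  intro i
  have hi := i.isLt
  simp only [sigmaAIII]
  split_ifs with h1 h2 h2 <;>
    simp only [Fin.val_rev, Fin.rev_rev, Fin.ext_iff] at * <;> omega


private lemma theta_fixed_iff (m : ℕ) (i j : Fin m) (hij : i ≠ j) :
    thetaAIII m (stdVec m i - stdVec m j) = stdVec m i - stdVec m j ↔
      sigmaAIII m i = i ∧ sigmaAIII m j = j := by
  constructor
  · intro h
    have hi := congrFun h i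
    have hj := congrFun h j
    simp only [thetaAIII, stdVec, LinearMap.funLeft_apply, Pi.sub_apply,
      Pi.single_apply] at hi hj
    constructor
    · by_contra hc
      rcases eq_or_ne (sigmaAIII m i) j with hsj | hsj
      · simp [hc, hsj, hij, Ne.symm hij] at hi
        exact absurd hi (by norm_num)
      · simp [hc, hsj, hij, Ne.symm hij] at hi
    · by_contra hc
      rcases eq_or_ne (sigmaAIII m j) i with hsj | hsj
      · simp [hc, hsj, hij, Ne.symm hij] at hj
        exact absurd hj (by norm_num)
      · simp [hc, hsj, hij, Ne.symm hij] at hj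
  · rintro ⟨hi, hj⟩
    funext k
    simp only [thetaAIII, stdVec, LinearMap.funLeft_apply, Pi.sub_apply,
      Pi.single_apply]
    have h1 : (sigmaAIII m k = i) ↔ (k = i) := by
      constructor
      · intro h; exact (sigma_invol m).injective (by rw [h, hi])
      · intro h; rw [h, hi]
    have h2 : (sigmaAIII m k = j) ↔ (k = j) := by
      constructor
      · intro h; exact (sigma_invol m).injective (by rw [h, hj])
      · intro h; rw [h, hj]
    simp [h1, h2]


private lemma key_sum (m : ℕ) (k : Fin m) :
    (∑ p ∈ Finset.univ.filter (fun p : Fin m × Fin m =>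
        p.1 < p.2 ∧ (Pbig m p.1 ∨ Pbig m p.2)),
      ((if k = p.1 then (1:ℝ) else 0) - (if k = p.2 then (1:ℝ) else 0))) =
    ((Finset.univ.filter fun j : Fin m => k < j ∧ (Pbig m k ∨ Pbig m j)).card : ℝ)
      - ((Finset.univ.filter fun i : Fin m => i < k ∧ (Pbig m i ∨ Pbig m k)).card : ℝ) := by
  rw [Finset.sum_filter, Fintype.sum_prod_type]
  have hsplit : ∀ i j : Fin m,
      (if (i < j ∧ (Pbig m i ∨ Pbig m j)) then
          ((if k = i then (1:ℝ) else 0) - (if k = j then (1:ℝ) else 0)) else 0)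
      = (if k = i then (if i < j ∧ (Pbig m i ∨ Pbig m j) then (1:ℝ) else 0) else 0)
        - (if k = j then (if i < j ∧ (Pbig m i ∨ Pbig m j) then (1:ℝ) else 0) else 0) := by
    intro i j
    split_ifs <;> norm_num
  simp only [hsplit]
  simp only [Finset.sum_sub_distrib]
  congr 1
  · rw [Finset.sum_comm]
    rw [Finset.sum_congr rfl (fun j _ => Finset.sum_ite_eq Finset.univ k _)]
    simp [Finset.sum_boole]
  · rw [Finset.sum_congr rfl (fun i _ => Finset.sum_ite_eq Finset.univ k _)]
    simp [Finset.sum_boole]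


/-- `2ρ_θ`: the sum of the positive roots `e_i − e_j` (`i < j`) not fixed by `θ`
equals `(m−1)(e_1 − e_m) + (m−3)(e_2 − e_{m−1})`. -/
theorem two_rho_theta_AIII_two_m (m : ℕ) (hm : 4 ≤ m) :
    let e : Fin m → (Fin m → ℝ) := stdVec m
    let θ : (Fin m → ℝ) →ₗ[ℝ] (Fin m → ℝ) := thetaAIII m
    (∑ p ∈ Finset.univ.filter (fun p : Fin m × Fin m =>
        p.1 < p.2 ∧ θ (e p.1 - e p.2) ≠ e p.1 - e p.2), (e p.1 - e p.2)) =
      ((m : ℝ) - 1) • (e ⟨0, by omega⟩ - e ⟨m - 1, by omega⟩) +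
        ((m : ℝ) - 3) • (e ⟨1, by omega⟩ - e ⟨m - 2, by omega⟩) := by
  intro e θ
  have hS : Finset.univ.filter (fun p : Fin m × Fin m =>
        p.1 < p.2 ∧ θ (e p.1 - e p.2) ≠ e p.1 - e p.2)
      = Finset.univ.filter (fun p : Fin m × Fin m =>
        p.1 < p.2 ∧ (Pbig m p.1 ∨ Pbig m p.2)) := by
    apply Finset.filter_congr
    intro p _
    constructor
    · rintro ⟨hlt, hne⟩
      refine ⟨hlt, ?_⟩
      by_contra hc
      push_neg at hc
      obtain ⟨h1, h2⟩ := hc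
      exact hne ((theta_fixed_iff m p.1 p.2 (ne_of_lt hlt)).mpr
        ⟨by by_contra h; exact h1 ((sigma_ne_iff m hm p.1).mp h),
         by by_contra h; exact h2 ((sigma_ne_iff m hm p.2).mp h)⟩)
    · rintro ⟨hlt, hP⟩
      refine ⟨hlt, fun hfix => ?_⟩
      obtain ⟨h1, h2⟩ := (theta_fixed_iff m p.1 p.2 (ne_of_lt hlt)).mp hfix
      rcases hP with hP | hP
      · exact ((sigma_ne_iff m hm p.1).mpr hP) h1
      · exact ((sigma_ne_iff m hm p.2).mpr hP) h2
  rw [hS]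
  funext k
  have hk := k.isLt
  simp only [show e = stdVec m from rfl, Finset.sum_apply, Pi.add_apply,
    Pi.smul_apply, Pi.sub_apply, stdVec, Pi.single_apply, smul_eq_mul]
  rw [key_sum m k]
  by_cases hPk : Pbig m k
  · have hA : Finset.univ.filter (fun j : Fin m => k < j ∧ (Pbig m k ∨ Pbig m j))
        = Finset.Ioi k := by
      ext x; simp [hPk]
    have hC : Finset.univ.filter (fun i : Fin m => i < k ∧ (Pbig m i ∨ Pbig m k))
        = Finset.Iio k := by
      ext x; simp [hPk]
    rw [hA, hC, Fin.card_Ioi, Fin.card_Iio]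
    simp only [Fin.ext_iff]
    rcases hPk with h0 | h1 | h2 | h3
    · simp only [h0, Nat.sub_zero, Nat.cast_zero,
        if_pos rfl, if_neg (by omega : ¬(0:ℕ) = m - 1),
        if_neg (by omega : ¬(0:ℕ) = 1), if_neg (by omega : ¬(0:ℕ) = m - 2)]
      rw [Nat.cast_sub (by omega : 1 ≤ m)]
      push_cast; ring
    · simp only [h1,
        if_neg (by omega : ¬(1:ℕ) = 0), if_neg (by omega : ¬(1:ℕ) = m - 1),
        if_pos rfl, if_neg (by omega : ¬(1:ℕ) = m - 2)]
      rw [show m - 1 - 1 = m - 2 by omega, Nat.cast_sub (by omega : 2 ≤ m)]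
      push_cast; ring
    · simp only [h2,
        if_neg (by omega : ¬m - 1 = 0), if_pos rfl,
        if_neg (by omega : ¬m - 1 = 1), if_neg (by omega : ¬m - 1 = m - 2)]
      rw [show m - 1 - (m - 1) = 0 by omega, Nat.cast_sub (by omega : 1 ≤ m)]
      push_cast; ring
    · simp only [h3,
        if_neg (by omega : ¬m - 2 = 0), if_neg (by omega : ¬m - 2 = m - 1),
        if_neg (by omega : ¬m - 2 = 1), if_pos rfl]
      rw [show m - 1 - (m - 2) = 1 by omega, Nat.cast_sub (by omega : 2 ≤ m)]
      push_cast; ring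
  · simp only [Pbig, not_or] at hPk
    obtain ⟨hn0, hn1, hn2, hn3⟩ := hPk
    have hA : Finset.univ.filter (fun j : Fin m => k < j ∧ (Pbig m k ∨ Pbig m j))
        = {(⟨m - 2, by omega⟩ : Fin m), ⟨m - 1, by omega⟩} := by
      ext x
      have hx := x.isLt
      simp only [Finset.mem_filter, Finset.mem_univ, true_and, Finset.mem_insert,
        Finset.mem_singleton, Pbig, Fin.lt_def, Fin.ext_iff]
      omega
    have hC : Finset.univ.filter (fun i : Fin m => i < k ∧ (Pbig m i ∨ Pbig m k))
        = {(⟨0, by omega⟩ : Fin m), ⟨1, by omega⟩} := by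
      ext x
      have hx := x.isLt
      simp only [Finset.mem_filter, Finset.mem_univ, true_and, Finset.mem_insert,
        Finset.mem_singleton, Pbig, Fin.lt_def, Fin.ext_iff]
      omega
    rw [hA, hC, Finset.card_pair (by simp only [ne_eq, Fin.ext_iff]; omega),
      Finset.card_pair (by simp only [ne_eq, Fin.ext_iff]; omega)]
    simp only [Fin.ext_iff, if_neg hn0, if_neg hn1, if_neg hn2, if_neg hn3]
    ring
end

section
/- For every integer m ≥ 4, the integral ∫_{m−3/2}^{m} ((4m−8)/(4m−7)·t − (m−1)) · (t(2m−3−t))^{2m−7} · (2m−3−2t)² dt is strictly positive. -/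
/-!
Substituting `t = c + u` with `c = m - 3/2` turns the integrand into
`4A (u - u₀) u² (c² - u²)^(2m-7)` on `[0, 3/2]`, where `A = (4m-8)/(4m-7)` and
`u₀ = (3m-5)/(4m-8) ≤ 7/8`. The polynomial factor is negative before `u₀` and positive after,
while the weight `(c² - u²)^N` decreases, so the integral is at least
`c^{2N} ∫₀^{u₀} + (c² - 9/4)^N ∫_{u₀}^{3/2}` of `(u - u₀) u²`. Bernoulli's inequality gives
`(c² - 9/4)^N ≥ (4/9) c^{2N}`, and the resulting explicit quartic in `u₀` is positive.
-/

open MeasureTheory intervalIntegral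

theorem integral_sub_mul_sq (s a b : ℝ) :
    ∫ u in a..b, (u - s) * u ^ 2 = (b ^ 4 - a ^ 4) / 4 - s * (b ^ 3 - a ^ 3) / 3 := by
  have hpoly : (fun u : ℝ => (u - s) * u ^ 2) = fun u => u ^ 3 - s * u ^ 2 := by
    ext u; ring
  rw [hpoly, intervalIntegral.integral_sub (by apply Continuous.intervalIntegrable; fun_prop)
    (by apply Continuous.intervalIntegrable; fun_prop), intervalIntegral.integral_const_mul,
    integral_pow, integral_pow]
  ring

theorem le_integral_mul_of_sign_change {ψ w : ℝ → ℝ} {a s b W₁ W₂ : ℝ} (has : a ≤ s)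
    (hsb : s ≤ b) (hψ : Continuous ψ) (hw : Continuous w)
    (hψ_nonpos : ∀ t ∈ Set.Icc a s, ψ t ≤ 0) (hψ_nonneg : ∀ t ∈ Set.Icc s b, 0 ≤ ψ t)
    (hw_le : ∀ t ∈ Set.Icc a s, w t ≤ W₁) (hw_ge : ∀ t ∈ Set.Icc s b, W₂ ≤ w t) :
    W₁ * (∫ t in a..s, ψ t) + W₂ * ∫ t in s..b, ψ t ≤ ∫ t in a..b, ψ t * w t := by
  have hψw : Continuous fun t => ψ t * w t := hψ.mul hw
  rw [← integral_add_adjacent_intervals (hψw.intervalIntegrable a s) (hψw.intervalIntegrable s b),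
    ← intervalIntegral.integral_const_mul, ← intervalIntegral.integral_const_mul]
  gcongr ?_ + ?_
  · refine integral_mono_on has ((continuous_const.mul hψ).intervalIntegrable a s)
      (hψw.intervalIntegrable a s) fun t ht => ?_
    nlinarith [hψ_nonpos t ht, hw_le t ht]
  · refine integral_mono_on hsb ((continuous_const.mul hψ).intervalIntegrable s b)
      (hψw.intervalIntegrable s b) fun t ht => ?_
    nlinarith [hψ_nonneg t ht, hw_ge t ht]

theorem one_sub_mul_div_mul_pow_le_sub_pow {a d : ℝ} (ha : 0 < a) (hd : d ≤ 2 * a) (n : ℕ) :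
    (1 - n * d / a) * a ^ n ≤ (a - d) ^ n := by
  have hbern := one_add_mul_le_pow (a := -(d / a))
    (by rw [neg_le_neg_iff, div_le_iff₀ ha]; linarith) n
  calc (1 - n * d / a) * a ^ n = (1 + n * -(d / a)) * a ^ n := by ring
    _ ≤ (1 + -(d / a)) ^ n * a ^ n := by gcongr
    _ = (a - d) ^ n := by rw [← mul_pow]; congr 1; field_simp; ring

theorem integral_sub_mul_sq_mul_pow_pos {c u₀ : ℝ} {N : ℕ} (hu₀ : 0 ≤ u₀) (hu₀_le : u₀ ≤ 7 / 8)
    (hc : 9 / 4 ≤ c ^ 2) (hN : 81 * N ≤ 20 * c ^ 2) :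
    0 < ∫ u in (0 : ℝ)..3 / 2, (u - u₀) * u ^ 2 * (c ^ 2 - u ^ 2) ^ N := by
  have hsplit := le_integral_mul_of_sign_change (ψ := fun u => (u - u₀) * u ^ 2)
    (w := fun u => (c ^ 2 - u ^ 2) ^ N) (W₁ := (c ^ 2) ^ N) (W₂ := (c ^ 2 - 9 / 4) ^ N)
    (b := 3 / 2) hu₀ (by linarith) (by fun_prop) (by fun_prop)
    (fun u hu => mul_nonpos_of_nonpos_of_nonneg (by linarith [hu.2]) (sq_nonneg u))
    (fun u hu => mul_nonneg (by linarith [hu.1]) (sq_nonneg u))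
    (fun u hu => pow_le_pow_left₀ (by nlinarith [hu.1, hu.2]) (by nlinarith) N)
    (fun u hu => pow_le_pow_left₀ (by linarith) (by nlinarith [hu.1, hu.2]) N)
  simp only [integral_sub_mul_sq] at hsplit
  have hbern := one_sub_mul_div_mul_pow_le_sub_pow (a := c ^ 2) (d := 9 / 4) (by linarith)
    (by linarith) N
  have hfrac : 4 / 9 ≤ 1 - N * (9 / 4) / c ^ 2 := by
    rw [mul_div_assoc', le_sub_comm, div_le_iff₀ (by linarith)]
    linarith
  have hpow : 0 < (c ^ 2) ^ N := by positivity
  calc (0 : ℝ) < (c ^ 2) ^ N * (9 / 16 - u₀ / 2 - 5 * u₀ ^ 4 / 108) := by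
        have : 0 < 9 / 16 - u₀ / 2 - 5 * u₀ ^ 4 / 108 := by
          nlinarith [pow_le_pow_left₀ hu₀ hu₀_le 4]
        positivity
    _ = (c ^ 2) ^ N * (-u₀ ^ 4 / 12) +
          4 / 9 * (c ^ 2) ^ N * (81 / 64 - 9 * u₀ / 8 + u₀ ^ 4 / 12) := by
        ring
    _ ≤ (c ^ 2) ^ N * (-u₀ ^ 4 / 12) +
          (c ^ 2 - 9 / 4) ^ N * (81 / 64 - 9 * u₀ / 8 + u₀ ^ 4 / 12) := by
        gcongr
        · nlinarith [pow_nonneg hu₀ 4]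
        · exact (mul_le_mul_of_nonneg_right hfrac hpow.le).trans hbern
    _ ≤ _ := by convert hsplit using 2 <;> ring

theorem eighty_one_mul_two_mul_sub_seven_le (m : ℕ) :
    81 * (2 * (m : ℝ) - 7) ≤ 20 * ((m : ℝ) - 3 / 2) ^ 2 := by
  -- the difference is `2 (m - 6) (10 m - 51)`, whose roots `51/10 < 6` enclose no integer
  have hfactor : (0 : ℤ) ≤ (m - 6) * (10 * m - 51) := by
    rcases le_or_gt m 5 with h | h <;> nlinarith
  have : (0 : ℝ) ≤ (m - 6) * (10 * m - 51) := by exact_mod_cast hfactor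
  nlinarith

/-- Lemma 3.9: for every integer `m ≥ 4`,
`∫_{m−3/2}^{m} ((4m−8)/(4m−7)·t − (m−1)) (t(2m−3−t))^{2m−7} (2m−3−2t)² dt > 0`. -/
theorem lemma_inequality1 (m : ℕ) (hm : 4 ≤ m) :
    0 < ∫ t in ((m : ℝ) - 3 / 2)..(m : ℝ),
        ((4 * (m : ℝ) - 8) / (4 * (m : ℝ) - 7) * t - ((m : ℝ) - 1)) *
          (t * (2 * (m : ℝ) - 3 - t)) ^ (2 * m - 7) * (2 * (m : ℝ) - 3 - 2 * t) ^ 2 := by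
  have hm' : (4 : ℝ) ≤ m := by exact_mod_cast hm
  set c : ℝ := m - 3 / 2 with hc
  set u₀ : ℝ := (3 * m - 5) / (4 * m - 8) with hu₀
  set N := 2 * m - 7 with hN
  have hintegrand : ∀ u : ℝ,
      ((4 * (m : ℝ) - 8) / (4 * m - 7) * (u + c) - (m - 1)) *
        ((u + c) * (2 * m - 3 - (u + c))) ^ N * (2 * m - 3 - 2 * (u + c)) ^ 2 =
      4 * ((4 * m - 8) / (4 * m - 7)) * ((u - u₀) * u ^ 2 * (c ^ 2 - u ^ 2) ^ N) := by
    intro u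
    have h₇ : (4 * m - 7 : ℝ) ≠ 0 := by linarith
    have h₈ : (4 * m - 8 : ℝ) ≠ 0 := by linarith
    rw [show (u + c) * (2 * m - 3 - (u + c)) = c ^ 2 - u ^ 2 by rw [hc]; ring, hu₀, hc]
    field_simp
    ring
  have hsubst := integral_comp_add_right (a := 0) (b := 3 / 2) (fun t : ℝ =>
    ((4 * (m : ℝ) - 8) / (4 * (m : ℝ) - 7) * t - ((m : ℝ) - 1)) *
      (t * (2 * (m : ℝ) - 3 - t)) ^ N * (2 * (m : ℝ) - 3 - 2 * t) ^ 2) c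
  rw [zero_add, show 3 / 2 + c = m by ring] at hsubst
  rw [← hsubst]
  simp_rw [hintegrand, intervalIntegral.integral_const_mul]
  have hNcast : (N : ℝ) = 2 * m - 7 := by rw [hN, Nat.cast_sub (by omega)]; push_cast; ring
  refine mul_pos (by apply mul_pos four_pos; apply div_pos <;> linarith) <|
    integral_sub_mul_sq_mul_pow_pos (by apply div_nonneg <;> linarith) ?_ (by nlinarith)
      (hNcast ▸ eighty_one_mul_two_mul_sub_seven_le m)
  rw [hu₀, div_le_iff₀ (by linarith)]
  linarith
end

section
/- For every integer m ≥ 4, m^{2m−6} · ∫_0^{m−3} t^{2m−7}·(m+t)²·(m−t)²·(2t−2m+7) dt + (2m−3)³ · ∫_{m−3/2}^{m} (t(2m−3−t))^{2m−7}·(2m−3−2t)² dt > 0. -/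
set_option maxHeartbeats 2000000

open MeasureTheory intervalIntegral

lemma mono_int (c : ℝ) (n : ℕ) (a b : ℝ) :
    ∫ t in a..b, c * t ^ n = c * ((b ^ (n+1) - a ^ (n+1)) / (n+1)) := by
  rw [intervalIntegral.integral_const_mul, integral_pow]

lemma intable (c : ℝ) (n : ℕ) (a b : ℝ) :
    IntervalIntegrable (fun t : ℝ => c * t ^ n) volume a b :=
  (continuous_const.mul (continuous_pow n)).intervalIntegrable a b

lemma six_int (c1 c2 c3 c4 c5 c6 : ℝ) (n1 n2 n3 n4 n5 n6 : ℕ) (a b : ℝ) :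
    (∫ t in a..b, (c1 * t ^ n1 + c2 * t ^ n2 + c3 * t ^ n3
        - (c4 * t ^ n4 + c5 * t ^ n5 + c6 * t ^ n6)))
      = c1 * ((b ^ (n1+1) - a ^ (n1+1)) / (n1+1))
        + c2 * ((b ^ (n2+1) - a ^ (n2+1)) / (n2+1))
        + c3 * ((b ^ (n3+1) - a ^ (n3+1)) / (n3+1))
        - (c4 * ((b ^ (n4+1) - a ^ (n4+1)) / (n4+1))
          + c5 * ((b ^ (n5+1) - a ^ (n5+1)) / (n5+1))
          + c6 * ((b ^ (n6+1) - a ^ (n6+1)) / (n6+1))) := by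
  rw [intervalIntegral.integral_sub (((intable c1 n1 a b).add (intable c2 n2 a b)).add (intable c3 n3 a b))
      (((intable c4 n4 a b).add (intable c5 n5 a b)).add (intable c6 n6 a b)),
    intervalIntegral.integral_add ((intable c1 n1 a b).add (intable c2 n2 a b)) (intable c3 n3 a b),
    intervalIntegral.integral_add (intable c1 n1 a b) (intable c2 n2 a b),
    intervalIntegral.integral_add ((intable c4 n4 a b).add (intable c5 n5 a b)) (intable c6 n6 a b),
    intervalIntegral.integral_add (intable c4 n4 a b) (intable c5 n5 a b),
    mono_int, mono_int, mono_int, mono_int, mono_int, mono_int]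


/-- Lemma 3.10: for every integer `m ≥ 4`,
`m^{2m−6} ∫_0^{m−3} t^{2m−7}(m+t)²(m−t)²(2t−2m+7) dt
  + (2m−3)³ ∫_{m−3/2}^{m} (t(2m−3−t))^{2m−7}(2m−3−2t)² dt > 0`. -/
theorem lemma_inequality2 (m : ℕ) (hm : 4 ≤ m) :
    0 < (m : ℝ) ^ (2 * m - 6) *
          (∫ t in (0 : ℝ)..((m : ℝ) - 3),
            t ^ (2 * m - 7) * ((m : ℝ) + t) ^ 2 * ((m : ℝ) - t) ^ 2 *
              (2 * t - 2 * (m : ℝ) + 7)) +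
        (2 * (m : ℝ) - 3) ^ 3 *
          (∫ t in ((m : ℝ) - 3 / 2)..(m : ℝ),
            (t * (2 * (m : ℝ) - 3 - t)) ^ (2 * m - 7) * (2 * (m : ℝ) - 3 - 2 * t) ^ 2) := by
  obtain ⟨k, rfl⟩ : ∃ k, m = k + 4 := ⟨m - 4, by omega⟩
  rw [show 2 * (k + 4) - 6 = 2 * k + 2 from by omega,
      show 2 * (k + 4) - 7 = 2 * k + 1 from by omega]
  push_cast
  have hK0 : (0:ℝ) ≤ (k:ℝ) := Nat.cast_nonneg k
  set K : ℝ := (k : ℝ) with hKdef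
  -- first integral, closed form
  have hI1 : (∫ t in (0:ℝ)..(K + 4 - 3),
        t ^ (2*k+1) * (K+4+t)^2 * (K+4-t)^2 * (2*t - 2*(K+4) + 7))
      = 2*(K+4)^4 * (K+1)^(2*k+3)/(2*K+3)
        + 2*(K+4)^2*(2*K+1) * (K+1)^(2*k+4)/(2*K+4)
        + 2 * (K+1)^(2*k+7)/(2*K+7)
        - ((K+4)^4*(2*K+1) * (K+1)^(2*k+2)/(2*K+2)
          + 4*(K+4)^2 * (K+1)^(2*k+5)/(2*K+5)
          + (2*K+1) * (K+1)^(2*k+6)/(2*K+6)) := by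
    have hcong : Set.EqOn
        (fun t : ℝ => t ^ (2*k+1) * (K+4+t)^2 * (K+4-t)^2 * (2*t - 2*(K+4) + 7))
        (fun t : ℝ => 2*(K+4)^4 * t^(2*k+2) + 2*(K+4)^2*(2*K+1) * t^(2*k+3) + 2 * t^(2*k+6)
          - ((K+4)^4*(2*K+1) * t^(2*k+1) + 4*(K+4)^2 * t^(2*k+4) + (2*K+1) * t^(2*k+5)))
        (Set.uIcc 0 (K+4-3)) := fun t _ => by ring
    rw [intervalIntegral.integral_congr hcong, six_int]
    push_cast
    norm_num
    ring
  rw [hI1]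
  -- second integral, lower bound
  have hmono : (K+4)^(2*k+1) * (K+1)^(2*k+1) * (9/2)
      ≤ ∫ t in (K+4-3/2)..(K+4),
          (t*(2*(K+4)-3-t))^(2*k+1) * (2*(K+4)-3-2*t)^2 := by
    rw [← mul_pow]
    have e1 : ∫ t in (K+4-3/2)..(K+4), ((K+4)*(K+1))^(2*k+1) * (2*(K+4)-3-2*t)^2
        = ((K+4)*(K+1))^(2*k+1) * (9/2) := by
      rw [intervalIntegral.integral_const_mul]
      congr 1
      have hc : Set.EqOn (fun t : ℝ => (2*(K+4)-3-2*t)^2)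
          (fun t : ℝ => 4*t^2 + (2*(K+4)-3)^2*t^0 + 0*t^0
            - ((4*(2*(K+4)-3))*t^1 + 0*t^0 + 0*t^0)) (Set.uIcc (K+4-3/2) (K+4)) :=
        fun t _ => by ring
      rw [intervalIntegral.integral_congr hc, six_int]
      push_cast
      ring
    rw [← e1]
    refine intervalIntegral.integral_mono_on (by linarith)
      ((Continuous.intervalIntegrable (by fun_prop) _ _))
      ((Continuous.intervalIntegrable (by fun_prop) _ _)) ?_
    intro t ht
    refine mul_le_mul_of_nonneg_right (pow_le_pow_left₀ (by positivity) ?_ _) (sq_nonneg _)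
    nlinarith [mul_nonneg (by linarith [ht.2] : (0:ℝ) ≤ K+4-t) (by linarith [ht.1] : (0:ℝ) ≤ t-(K+1))]
  -- final combination
  have hQ : (0:ℝ) <
      2*(K+4)^5*(K+1)^2/(2*K+3) + 2*(K+4)^3*(2*K+1)*(K+1)^3/(2*K+4)
        + 2*(K+4)*(K+1)^6/(2*K+7)
        - ((K+4)^5*(2*K+1)*(K+1)/(2*K+2) + 4*(K+4)^3*(K+1)^4/(2*K+5)
          + (K+4)*(2*K+1)*(K+1)^5/(2*K+6))
        + 9/2*(2*(K+4)-3)^3 := by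
    have hD : (0:ℝ) < (2*K+2)*(2*K+3)*(2*K+4)*(2*K+5)*(2*K+6)*(2*K+7) := by positivity
    have hQN : 2*(K+4)^5*(K+1)^2/(2*K+3) + 2*(K+4)^3*(2*K+1)*(K+1)^3/(2*K+4)
        + 2*(K+4)*(K+1)^6/(2*K+7)
        - ((K+4)^5*(2*K+1)*(K+1)/(2*K+2) + 4*(K+4)^3*(K+1)^4/(2*K+5)
          + (K+4)*(2*K+1)*(K+1)^5/(2*K+6))
        + 9/2*(2*(K+4)-3)^3
        = (1792*K^9 + 40512*K^8 + 399488*K^7 + 2255432*K^6 + 8036256*K^5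
            + 18740380*K^4 + 28593724*K^3 + 27504324*K^2 + 15110180*K + 3600792)
          / ((2*K+2)*(2*K+3)*(2*K+4)*(2*K+5)*(2*K+6)*(2*K+7)) := by
      rw [eq_div_iff hD.ne']
      field_simp
      ring
    rw [hQN]
    positivity
  have hiden : (K+4)^(2*k+2) *
      (2*(K+4)^4 * (K+1)^(2*k+3)/(2*K+3)
        + 2*(K+4)^2*(2*K+1) * (K+1)^(2*k+4)/(2*K+4)
        + 2 * (K+1)^(2*k+7)/(2*K+7)
        - ((K+4)^4*(2*K+1) * (K+1)^(2*k+2)/(2*K+2)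
          + 4*(K+4)^2 * (K+1)^(2*k+5)/(2*K+5)
          + (2*K+1) * (K+1)^(2*k+6)/(2*K+6)))
      + (2*(K+4)-3)^3 * ((K+4)^(2*k+1) * (K+1)^(2*k+1) * (9/2))
      = (K+4)^(2*k+1) * (K+1)^(2*k+1) *
        (2*(K+4)^5*(K+1)^2/(2*K+3) + 2*(K+4)^3*(2*K+1)*(K+1)^3/(2*K+4)
          + 2*(K+4)*(K+1)^6/(2*K+7)
          - ((K+4)^5*(2*K+1)*(K+1)/(2*K+2) + 4*(K+4)^3*(K+1)^4/(2*K+5)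
            + (K+4)*(2*K+1)*(K+1)^5/(2*K+6))
          + 9/2*(2*(K+4)-3)^3) := by
    ring
  have hP : (0:ℝ) < (K+4)^(2*k+1) * (K+1)^(2*k+1) := by positivity
  have h2M : (0:ℝ) ≤ (2*(K+4)-3)^3 := pow_nonneg (by linarith) 3
  nlinarith [mul_le_mul_of_nonneg_left hmono h2M, mul_pos hP hQ, hiden]
end

section
/- Let m ≥ 4 be an integer and let Ω₁ ⊂ ℝ² be the triangle with vertices (0,0), (m,0), (m,m−3), with density P_m(x,y) = 4·x^{2m−7}·y^{2m−7}·(x+y)²·(x−y)². Then (∫_{Ω₁} x·P_m(x,y) dxdy)/(∫_{Ω₁} P_m(x,y) dxdy) = m(4m−8)/(4m−7), and this quantity is strictly greater than m−1. -/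
open MeasureTheory Set

section AuxBarycenter

lemma intPow (A : ℝ) (n : ℕ) (b : ℝ) :
    ∫ y in (0:ℝ)..b, A * y ^ n = A * b ^ (n + 1) / ((n : ℝ) + 1) := by
  rw [intervalIntegral.integral_const_mul, integral_pow]
  simp
  ring

lemma triple (A B C : ℝ) (n : ℕ) (b : ℝ) :
    ∫ y in (0:ℝ)..b, (A * y ^ n + B * y ^ (n + 2) + C * y ^ (n + 4)) =
      A * b ^ (n + 1) / ((n : ℝ) + 1) + B * b ^ (n + 3) / ((n : ℝ) + 3)
        + C * b ^ (n + 5) / ((n : ℝ) + 5) := by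
  have i : ∀ (D : ℝ) (k : ℕ), IntervalIntegrable (fun y => D * y ^ k) volume 0 b :=
    fun D k => ((continuous_const.mul (continuous_pow k)).intervalIntegrable 0 b)
  rw [intervalIntegral.integral_add ((i A n).add (i B (n+2))) (i C (n+4)),
    intervalIntegral.integral_add (i A n) (i B (n+2)), intPow, intPow, intPow]
  push_cast
  ring

lemma key (a j : ℕ) (M c : ℝ) (hM : 0 < M) (hc : 0 ≤ c) :
    ∫ p in {p : ℝ × ℝ | p.1 ∈ Icc 0 M ∧ p.2 ∈ Icc 0 (c * p.1)},
      p.1 ^ j * (4 * p.1 ^ a * p.2 ^ a * (p.1 + p.2) ^ 2 * (p.1 - p.2) ^ 2) =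
      (4 * c ^ (a+1) / ((a:ℝ)+1) - 8 * c ^ (a+3) / ((a:ℝ)+3) + 4 * c ^ (a+5) / ((a:ℝ)+5))
        * M ^ (2*a+6+j) / (2*(a:ℝ)+6+(j:ℝ)) := by
  set S : Set (ℝ × ℝ) := {p : ℝ × ℝ | p.1 ∈ Icc 0 M ∧ p.2 ∈ Icc 0 (c * p.1)} with hS
  set F : ℝ × ℝ → ℝ := fun p =>
    p.1 ^ j * (4 * p.1 ^ a * p.2 ^ a * (p.1 + p.2) ^ 2 * (p.1 - p.2) ^ 2) with hF
  set Cval : ℝ := 4 * c ^ (a+1) / ((a:ℝ)+1) - 8 * c ^ (a+3) / ((a:ℝ)+3)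
    + 4 * c ^ (a+5) / ((a:ℝ)+5) with hCval
  have hFc : Continuous F := by fun_prop
  have hSeq : S = {p : ℝ × ℝ | 0 ≤ p.1} ∩ {p | p.1 ≤ M} ∩ {p | 0 ≤ p.2} ∩ {p | p.2 ≤ c * p.1} := by
    ext p; simp [hS, Set.mem_Icc]; tauto
  have hSclosed : IsClosed S := by
    rw [hSeq]
    exact (((isClosed_le continuous_const continuous_fst).inter
      (isClosed_le continuous_fst continuous_const)).inter
      (isClosed_le continuous_const continuous_snd)).inter
      (isClosed_le continuous_snd (continuous_const.mul continuous_fst))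
  have hSsub : S ⊆ Icc ((0:ℝ),(0:ℝ)) (M, c * M) := by
    rintro p ⟨⟨h1, h2⟩, h3, h4⟩
    refine ⟨⟨h1, h3⟩, ⟨h2, h4.trans (mul_le_mul_of_nonneg_left h2 hc)⟩⟩
  have hScomp : IsCompact S := isCompact_Icc.of_isClosed_subset hSclosed hSsub
  have hSm : MeasurableSet S := hSclosed.measurableSet
  have hInt : IntegrableOn F S := hFc.continuousOn.integrableOn_compact hScomp
  have hfun : ∀ x : ℝ, (∫ y, S.indicator F (x, y)) =
      (Icc (0:ℝ) M).indicator (fun x => Cval * x ^ (2*a+5+j)) x := by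
    intro x
    by_cases hx : x ∈ Icc (0:ℝ) M
    · rw [Set.indicator_of_mem hx]
      have hx0 : 0 ≤ x := hx.1
      have hslice : (fun y => S.indicator F (x, y)) =
          (Icc (0:ℝ) (c * x)).indicator (fun y => F (x, y)) := by
        funext y
        by_cases hy : y ∈ Icc (0:ℝ) (c * x)
        · rw [Set.indicator_of_mem hy, Set.indicator_of_mem (by exact ⟨hx, hy⟩)]
        · rw [Set.indicator_of_notMem hy, Set.indicator_of_notMem (by
            intro hmem; exact hy hmem.2)]
      rw [hslice, integral_indicator measurableSet_Icc, integral_Icc_eq_integral_Ioc,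
        ← intervalIntegral.integral_of_le (by positivity : (0:ℝ) ≤ c * x)]
      have hexp : (fun y => F (x, y)) = fun y =>
          (4 * x ^ (a+4+j)) * y ^ a + (-8 * x ^ (a+2+j)) * y ^ (a+2)
            + (4 * x ^ (a+j)) * y ^ (a+4) := by
        funext y; simp only [hF]; ring
      rw [hexp, triple, mul_pow, mul_pow, mul_pow]
      have h1 : ((a:ℝ)+1) ≠ 0 := by positivity
      have h3 : ((a:ℝ)+3) ≠ 0 := by positivity
      have h5 : ((a:ℝ)+5) ≠ 0 := by positivity
      rw [hCval]
      field_simp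
      ring
    · rw [Set.indicator_of_notMem hx]
      have : ∀ y : ℝ, S.indicator F (x, y) = 0 := fun y =>
        Set.indicator_of_notMem (fun hmem => hx hmem.1) _
      simp [this]
  calc ∫ p in S, F p = ∫ p, S.indicator F p := (integral_indicator hSm).symm
    _ = ∫ x, ∫ y, S.indicator F (x, y) := by
        rw [show (volume : Measure (ℝ × ℝ)) = Measure.prod volume volume from Measure.volume_eq_prod ℝ ℝ]
        exact integral_prod _ (by
          rw [← Measure.volume_eq_prod ℝ ℝ]; exact hInt.integrable_indicator hSm)
    _ = ∫ x, (Icc (0:ℝ) M).indicator (fun x => Cval * x ^ (2*a+5+j)) x :=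
        integral_congr_ae (Filter.Eventually.of_forall hfun)
    _ = ∫ x in Icc (0:ℝ) M, Cval * x ^ (2*a+5+j) := integral_indicator measurableSet_Icc
    _ = ∫ x in (0:ℝ)..M, Cval * x ^ (2*a+5+j) := by
        rw [integral_Icc_eq_integral_Ioc, intervalIntegral.integral_of_le hM.le]
    _ = Cval * M ^ (2*a+6+j) / (2*(a:ℝ)+6+(j:ℝ)) := by
        rw [intPow]
        have : 2*a+5+j+1 = 2*a+6+j := by omega
        rw [this]
        push_cast
        ring_nf


lemma hull_eq (M : ℝ) (hM : 3 < M) :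
    convexHull ℝ {((0:ℝ), (0:ℝ)), (M, 0), (M, M - 3)} =
      {p : ℝ × ℝ | p.1 ∈ Icc 0 M ∧ p.2 ∈ Icc 0 ((M - 3) / M * p.1)} := by
  have hM0 : 0 < M := by linarith
  have hc0 : 0 < (M - 3) / M := div_pos (by linarith) hM0
  have hcM : (M - 3) / M * M = M - 3 := by field_simp
  apply Subset.antisymm
  · apply convexHull_min
    · intro q hq
      simp only [Set.mem_insert_iff, Set.mem_singleton_iff] at hq
      rcases hq with h | h | h <;> subst h
      · exact ⟨Set.mem_Icc.mpr ⟨le_rfl, by norm_num <;> linarith⟩,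
          Set.mem_Icc.mpr (by norm_num)⟩
      · exact ⟨Set.mem_Icc.mpr ⟨by norm_num <;> linarith, le_rfl⟩,
          Set.mem_Icc.mpr ⟨le_rfl, by show (0:ℝ) ≤ (M-3)/M * M; rw [hcM]; linarith⟩⟩
      · exact ⟨Set.mem_Icc.mpr ⟨by norm_num <;> linarith, le_rfl⟩,
          Set.mem_Icc.mpr ⟨by show (0:ℝ) ≤ M - 3; linarith,
            by show M - 3 ≤ (M-3)/M * M; rw [hcM]⟩⟩
    · rintro p ⟨⟨hp1, hp2⟩, hp3, hp4⟩ q ⟨⟨hq1, hq2⟩, hq3, hq4⟩ s t hs ht hst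
      simp only [Set.mem_Icc] at *
      refine ⟨⟨?_, ?_⟩, ?_, ?_⟩ <;>
        simp only [Prod.fst_add, Prod.snd_add, Prod.smul_fst, Prod.smul_snd, smul_eq_mul]
      · positivity
      · nlinarith
      · positivity
      · nlinarith
  · rintro ⟨x, y⟩ ⟨⟨hx0, hxM⟩, hy0, hyc⟩
    simp only at hx0 hxM hy0 hyc
    by_cases hx : x = 0
    · subst hx
      have : y = 0 := le_antisymm (by simpa using hyc) hy0
      subst this
      exact subset_convexHull ℝ _ (by simp)
    · have hxpos : 0 < x := lt_of_le_of_ne hx0 (Ne.symm hx)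
      have htx1 : x / M ≤ 1 := (div_le_one hM0).2 hxM
      have hq1 : ((x : ℝ), (0:ℝ)) ∈ convexHull ℝ {((0:ℝ), (0:ℝ)), (M, 0), (M, M - 3)} := by
        refine segment_subset_convexHull (by simp) (by simp)
          (⟨1 - x / M, x / M, by linarith, by positivity, by ring, ?_⟩ :
            ((x : ℝ), (0:ℝ)) ∈ segment ℝ ((0:ℝ), (0:ℝ)) ((M:ℝ), (0:ℝ)))
        simp only [Prod.smul_mk, Prod.mk_add_mk, smul_eq_mul, Prod.mk.injEq]
        constructor
        · rw [mul_zero, zero_add, div_mul_cancel₀ _ hM0.ne']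
        · ring
      have hq2 : ((x : ℝ), (M - 3) / M * x) ∈
          convexHull ℝ {((0:ℝ), (0:ℝ)), (M, 0), (M, M - 3)} := by
        refine segment_subset_convexHull (by simp) (by simp)
          (⟨1 - x / M, x / M, by linarith, by positivity, by ring, ?_⟩ :
            ((x : ℝ), (M - 3) / M * x) ∈ segment ℝ ((0:ℝ), (0:ℝ)) ((M:ℝ), M - 3))
        simp only [Prod.smul_mk, Prod.mk_add_mk, smul_eq_mul, Prod.mk.injEq]
        constructor
        · rw [mul_zero, zero_add, div_mul_cancel₀ _ hM0.ne']
        · rw [mul_zero, zero_add]; ring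
      have hcx : 0 < (M - 3) / M * x := by positivity
      have hseg : ((x : ℝ), y) ∈ segment ℝ ((x : ℝ), (0:ℝ)) ((x : ℝ), (M - 3) / M * x) := by
        refine ⟨1 - y / ((M - 3) / M * x), y / ((M - 3) / M * x),
          by have : y / ((M - 3) / M * x) ≤ 1 := (div_le_one hcx).2 hyc; linarith,
          by positivity, by ring, ?_⟩
        simp only [Prod.smul_mk, Prod.mk_add_mk, smul_eq_mul, Prod.mk.injEq]
        constructor
        · ring
        · rw [mul_zero, zero_add, div_mul_cancel₀ _ hcx.ne']
      exact (convex_convexHull ℝ _).segment_subset hq1 hq2 hseg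


lemma Cpos (a : ℕ) (c : ℝ) (hc : 0 < c) :
    0 < 4 * c ^ (a+1) / ((a:ℝ)+1) - 8 * c ^ (a+3) / ((a:ℝ)+3) + 4 * c ^ (a+5) / ((a:ℝ)+5) := by
  have ha : (0:ℝ) ≤ (a:ℝ) := Nat.cast_nonneg a
  set α := (a:ℝ) with hα
  have h1 : (0:ℝ) < α + 1 := by linarith
  have h3 : (0:ℝ) < α + 3 := by linarith
  have h5 : (0:ℝ) < α + 5 := by linarith
  have hp : 0 < c ^ (a+1) := pow_pos hc _
  have hQ : 0 < 4 / (α+1) - 8 * c^2 / (α+3) + 4 * c^4 / (α+5) := by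
    have keyQ : 0 < (α+3)*(α+5)*4 - 8*c^2*(α+1)*(α+5) + 4*c^4*(α+1)*(α+3) := by
      nlinarith [sq_nonneg ((α+1)*(α+3)*c^2 - (α+1)*(α+5)), mul_pos h1 h5, mul_pos h1 h3,
        sq_nonneg c, sq_nonneg (c^2)]
    have heq : 4 / (α+1) - 8 * c^2 / (α+3) + 4 * c^4 / (α+5) =
        ((α+3)*(α+5)*4 - 8*c^2*(α+1)*(α+5) + 4*c^4*(α+1)*(α+3)) / ((α+1)*(α+3)*(α+5)) := by
      field_simp
    rw [heq]
    exact div_pos keyQ (by positivity)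
  have hrw : 4 * c ^ (a+1) / (α+1) - 8 * c ^ (a+3) / (α+3) + 4 * c ^ (a+5) / (α+5) =
      c ^ (a+1) * (4 / (α+1) - 8 * c^2 / (α+3) + 4 * c^4 / (α+5)) := by
    have e3 : c ^ (a+3) = c ^ (a+1) * c^2 := by ring
    have e5 : c ^ (a+5) = c ^ (a+1) * c^4 := by ring
    rw [e3, e5]; ring
  rw [hrw]
  exact mul_pos hp hQ

lemma ratio_calc (Cv X M d0 : ℝ) (hC : Cv ≠ 0) (hX : X ≠ 0) (hd0 : d0 ≠ 0)
    (hd1 : d0 + 1 ≠ 0) :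
    (Cv * (X * M) / (d0 + 1)) / (Cv * X / d0) = M * d0 / (d0 + 1) := by
  field_simp

end AuxBarycenter

/-- The `x`-coordinate of the barycenter of the triangle `Ω₁` with vertices
`(0,0)`, `(m,0)`, `(m,m−3)`, with respect to the Duistermaat–Heckman density
`P_m(x,y) = 4x^{2m−7}y^{2m−7}(x+y)²(x−y)²`, equals `m(4m−8)/(4m−7)`, and is `> m−1`. -/
theorem barycenter_Omega1_AIII_two_m (m : ℕ) (hm : 4 ≤ m) :
    let Ω : Set (ℝ × ℝ) := convexHull ℝ
      {((0 : ℝ), (0 : ℝ)), ((m : ℝ), 0), ((m : ℝ), (m : ℝ) - 3)}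
    let P : ℝ × ℝ → ℝ := fun p =>
      4 * p.1 ^ (2 * m - 7) * p.2 ^ (2 * m - 7) * (p.1 + p.2) ^ 2 * (p.1 - p.2) ^ 2
    (∫ p in Ω, p.1 * P p) / (∫ p in Ω, P p) = (m : ℝ) * (4 * (m : ℝ) - 8) / (4 * (m : ℝ) - 7) ∧
      (m : ℝ) - 1 < (m : ℝ) * (4 * (m : ℝ) - 8) / (4 * (m : ℝ) - 7) := by
  intro Ω P
  have hm4 : (4:ℝ) ≤ (m:ℝ) := by exact_mod_cast hm
  have hm3 : (3:ℝ) < (m:ℝ) := by linarith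
  have hM0 : (0:ℝ) < (m:ℝ) := by linarith
  set M : ℝ := (m:ℝ) with hMdef
  set c : ℝ := (M - 3) / M with hcdef
  have hc : 0 < c := by rw [hcdef]; exact div_pos (by linarith) hM0
  have hP : ∀ p : ℝ × ℝ, P p =
      4 * p.1 ^ (2*m-7) * p.2 ^ (2*m-7) * (p.1 + p.2) ^ 2 * (p.1 - p.2) ^ 2 := fun p => rfl
  have hΩ : Ω = {p : ℝ × ℝ | p.1 ∈ Icc 0 M ∧ p.2 ∈ Icc 0 (c * p.1)} := by
    rw [hcdef]; exact hull_eq M hm3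
  have hA : ((2*m-7 : ℕ) : ℝ) = 2 * M - 7 := by
    rw [Nat.cast_sub (by omega)]; push_cast; ring
  have h1 := key (2*m-7) 1 M c hM0 hc.le
  have h0 := key (2*m-7) 0 M c hM0 hc.le
  simp only [pow_one, pow_zero, one_mul, add_zero, Nat.cast_zero, Nat.cast_one] at h1 h0
  rw [hA] at h1 h0
  have hC : 0 < 4 * c ^ (2*m-7+1) / (2 * M - 7 + 1) - 8 * c ^ (2*m-7+3) / (2 * M - 7 + 3)
      + 4 * c ^ (2*m-7+5) / (2 * M - 7 + 5) := by
    have := Cpos (2*m-7) c hc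
    rwa [hA] at this
  constructor
  · simp only [hP]
    rw [hΩ, h1, h0]
    set e := 2*(2*m-7)+6 with hedef
    rw [show (M:ℝ) ^ (e+1) = M ^ e * M from pow_succ M e]
    have hd1 : (2 * (2 * M - 7) + 6 + 1 : ℝ) ≠ 0 := by intro h; nlinarith
    have hd0 : (2 * (2 * M - 7) + 6 : ℝ) ≠ 0 := by intro h; nlinarith
    have hMe : (M : ℝ) ^ e ≠ 0 := pow_ne_zero _ hM0.ne'
    rw [ratio_calc _ _ _ _ hC.ne' hMe (by intro h; nlinarith) hd1,
      show (2*(2*M-7)+6 : ℝ) = 4*M-8 from by ring,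
      show (4*M-8+1 : ℝ) = 4*M-7 from by ring]
  · rw [lt_div_iff₀ (by linarith : (0:ℝ) < 4 * (m:ℝ) - 7)]
    nlinarith
end

section
/- Let m ≥ 4 be an integer and let Ω₂ ⊂ ℝ² be the triangle with vertices (0,0), (m,m−3), (m−3/2,m−3/2), with density P_m(x,y) = 4·x^{2m−7}·y^{2m−7}·(x+y)²·(x−y)². Then (∫_{Ω₂} (x+y)·P_m(x,y) dxdy)/(∫_{Ω₂} P_m(x,y) dxdy) = (2m−3)(4m−8)/(4m−7), and this quantity is strictly greater than 2m−4. -/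
/-!
`Ω₂` is the cone from the origin over the segment from `(m − 3/2, m − 3/2)` to `(m, m − 3)`,
which lies on the line `x + y = c` with `c = 2m − 3`. In the coordinates
`(s, t) ↦ s • (t, c − t)`, with Jacobian `s |c|`, a density homogeneous of degree `d` becomes
`s ^ (d + 1)` times its restriction to the segment, and `(x + y)` contributes one more factor
`c s`. The segment integral therefore cancels from the barycenter, which is `c (d + 2) / (d + 3)`;
the density `P_m` has degree `d = 4m − 10`.
-/

open MeasureTheory Set

def coneParam (c : ℝ) (q : ℝ × ℝ) : ℝ × ℝ := (q.1 * q.2, q.1 * (c - q.2))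

theorem coneParam_eq_smul (c : ℝ) (q : ℝ × ℝ) : coneParam c q = q.1 • (q.2, c - q.2) := rfl

theorem segment_eq_image_line (c t₀ t₁ : ℝ) (h : t₀ ≤ t₁) :
    segment ℝ (t₁, c - t₁) (t₀, c - t₀) = (fun t => (t, c - t)) '' Icc t₀ t₁ := by
  have hline : ∀ t : ℝ, AffineMap.lineMap ((0 : ℝ), c) (1, c - 1) t = (t, c - t) := by
    intro t
    simp only [AffineMap.lineMap_apply_module, Prod.smul_mk, Prod.mk_add_mk, smul_eq_mul]
    ext <;> simp; ring
  rw [← segment_eq_Icc h, segment_symm, ← funext hline, image_segment, hline, hline]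

theorem convexHull_cone_eq_image (c t₀ t₁ : ℝ) (h : t₀ ≤ t₁) :
    convexHull ℝ {0, (t₁, c - t₁), (t₀, c - t₀)} = coneParam c '' (Icc 0 1 ×ˢ Icc t₀ t₁) := by
  rw [convexHull_insert (insert_nonempty _ _), convexHull_pair, convexJoin_singleton_left,
    segment_eq_image_line c t₀ t₁ h, biUnion_image]
  ext p
  simp only [segment_eq_image', sub_zero, zero_add, mem_iUnion, mem_image, mem_prod, Prod.exists,
    coneParam_eq_smul, exists_prop]
  constructor
  · rintro ⟨t, ht, s, hs, rfl⟩
    exact ⟨s, t, ⟨hs, ht⟩, rfl⟩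
  · rintro ⟨s, t, ⟨hs, ht⟩, rfl⟩
    exact ⟨t, ht, s, hs, rfl⟩

theorem hasFDerivAt_coneParam (c : ℝ) (q : ℝ × ℝ) :
    HasFDerivAt (coneParam c)
      (LinearMap.toContinuousLinearMap (Matrix.toLin (Module.Basis.finTwoProd ℝ)
        (Module.Basis.finTwoProd ℝ) !![q.2, q.1; c - q.2, -q.1])) q := by
  rw [Matrix.toLin_finTwoProd_toContinuousLinearMap]
  refine ((hasFDerivAt_fst.mul hasFDerivAt_snd).prodMk
    (hasFDerivAt_fst.mul ((hasFDerivAt_const c q).sub hasFDerivAt_snd))).congr_fderiv ?_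
  ext <;> simp

theorem injOn_coneParam {c : ℝ} (hc : c ≠ 0) : InjOn (coneParam c) (Ioi 0 ×ˢ univ) := by
  rintro ⟨s, t⟩ ⟨hs, -⟩ ⟨s', t'⟩ ⟨-, -⟩ h
  simp only [coneParam, Prod.mk.injEq] at h
  obtain ⟨h₁, h₂⟩ := h
  obtain rfl : s = s' := mul_right_cancel₀ hc (by linear_combination h₁ + h₂)
  obtain rfl : t = t' := mul_left_cancel₀ (ne_of_gt hs) h₁
  rfl

theorem coneParam_image_Icc_prod_ae_eq (c : ℝ) (T : Set ℝ) :
    coneParam c '' (Icc 0 1 ×ˢ T) =ᵐ[volume] coneParam c '' (Ioc 0 1 ×ˢ T) := by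
  rw [← Ioc_insert_left zero_le_one, insert_prod, image_union]
  refine union_ae_eq_right_of_ae_eq_empty
    (ae_eq_empty.2 (measure_mono_null ?_ (measure_singleton 0)))
  rintro _ ⟨_, ⟨t, -, rfl⟩, rfl⟩
  simp [coneParam]

theorem integral_convexHull_cone (f : ℝ × ℝ → ℝ) {c t₀ t₁ : ℝ} (hc : c ≠ 0) (h : t₀ ≤ t₁) :
    ∫ p in convexHull ℝ {0, (t₁, c - t₁), (t₀, c - t₀)}, f p
      = ∫ q in Ioc 0 1 ×ˢ Icc t₀ t₁, (q.1 * |c|) * f (coneParam c q) := by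
  have hS : MeasurableSet (Ioc (0 : ℝ) 1 ×ˢ Icc t₀ t₁) := measurableSet_Ioc.prod measurableSet_Icc
  rw [convexHull_cone_eq_image c t₀ t₁ h,
    setIntegral_congr_set (coneParam_image_Icc_prod_ae_eq c _),
    integral_image_eq_integral_abs_det_fderiv_smul volume hS
      (fun q _ => (hasFDerivAt_coneParam c q).hasFDerivWithinAt)
      ((injOn_coneParam hc).mono (prod_mono Ioc_subset_Ioi_self (subset_univ _)))]
  refine setIntegral_congr_fun hS fun q hq => ?_
  simp only [LinearMap.det_toContinuousLinearMap, LinearMap.det_toLin, Matrix.det_fin_two_of,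
    smul_eq_mul]
  rw [show q.2 * -q.1 - q.1 * (c - q.2) = -(q.1 * c) by ring, abs_neg, abs_mul,
    abs_of_pos hq.1.1]

theorem integral_convexHull_cone_of_homogeneous {f : ℝ × ℝ → ℝ} (d : ℕ)
    (hf : ∀ s : ℝ, 0 < s → ∀ p, f (s • p) = s ^ d * f p) {c t₀ t₁ : ℝ} (hc : c ≠ 0)
    (h : t₀ ≤ t₁) :
    ∫ p in convexHull ℝ {0, (t₁, c - t₁), (t₀, c - t₀)}, f p
      = |c| / (d + 2) * ∫ t in Icc t₀ t₁, f (t, c - t) := by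
  have hpow : ∫ s in Ioc (0 : ℝ) 1, s ^ (d + 1) = 1 / (d + 2) := by
    rw [← intervalIntegral.integral_of_le zero_le_one, integral_pow]
    norm_num
    ring
  rw [integral_convexHull_cone f hc h,
    setIntegral_congr_fun (measurableSet_Ioc.prod measurableSet_Icc)
      (g := fun q => q.1 ^ (d + 1) * (|c| * f (q.2, c - q.2))) fun q hq => ?_,
    Measure.volume_eq_prod, ← Measure.prod_restrict,
    integral_prod_mul (f := fun s : ℝ => s ^ (d + 1)) (g := fun t => |c| * f (t, c - t)), hpow,
    integral_const_mul]
  · ring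
  · simp only [coneParam_eq_smul, hf q.1 hq.1.1]
    ring

theorem barycenter_sum_convexHull_cone_of_homogeneous {f : ℝ × ℝ → ℝ} (d : ℕ)
    (hf : ∀ s : ℝ, 0 < s → ∀ p, f (s • p) = s ^ d * f p) {c t₀ t₁ : ℝ} (hc : c ≠ 0)
    (h : t₀ ≤ t₁) (hI : ∫ t in Icc t₀ t₁, f (t, c - t) ≠ 0) :
    (∫ p in convexHull ℝ {0, (t₁, c - t₁), (t₀, c - t₀)}, (p.1 + p.2) * f p)
      / (∫ p in convexHull ℝ {0, (t₁, c - t₁), (t₀, c - t₀)}, f p) = c * (d + 2) / (d + 3) := by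
  have hsum : ∀ s : ℝ, 0 < s → ∀ p : ℝ × ℝ,
      ((s • p).1 + (s • p).2) * f (s • p) = s ^ (d + 1) * ((p.1 + p.2) * f p) := by
    intro s hs p
    simp only [Prod.smul_fst, Prod.smul_snd, smul_eq_mul, hf s hs]
    ring
  rw [integral_convexHull_cone_of_homogeneous (d + 1) hsum hc h,
    integral_convexHull_cone_of_homogeneous d hf hc h]
  simp only [add_sub_cancel, integral_const_mul]
  have hc' : 0 < |c| := abs_pos.2 hc
  field_simp
  push_cast
  ring

/-- The density `P_m` of the paper is `dhDensity (2 * m - 7)`. -/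
def dhDensity (a : ℕ) (p : ℝ × ℝ) : ℝ :=
  4 * p.1 ^ a * p.2 ^ a * (p.1 + p.2) ^ 2 * (p.1 - p.2) ^ 2

theorem dhDensity_smul (a : ℕ) (s : ℝ) (p : ℝ × ℝ) :
    dhDensity a (s • p) = s ^ (2 * a + 4) * dhDensity a p := by
  simp only [dhDensity, Prod.smul_fst, Prod.smul_snd, smul_eq_mul]
  ring

theorem integral_dhDensity_line_pos (a : ℕ) {c t₀ t₁ : ℝ} (h₀ : c / 2 ≤ t₀) (h : t₀ < t₁)
    (h₁ : t₁ ≤ c) : 0 < ∫ t in Icc t₀ t₁, dhDensity a (t, c - t) := by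
  rw [integral_Icc_eq_integral_Ioc, ← intervalIntegral.integral_of_le h.le]
  refine intervalIntegral.intervalIntegral_pos_of_pos_on
    (Continuous.intervalIntegrable (by unfold dhDensity; fun_prop) _ _) (fun t ht => ?_) h
  have ht₀ : 0 < t := by linarith [ht.1, ht.2]
  have ht₁ : 0 < c - t := by linarith [ht.2]
  have hne : t - (c - t) ≠ 0 := by linarith [ht.1]
  unfold dhDensity
  positivity

/-- The sum of the barycenter coordinates of the triangle `Ω₂` with vertices
`(0,0)`, `(m,m−3)`, `(m−3/2,m−3/2)`, with respect to the Duistermaat–Heckman density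
`P_m(x,y) = 4x^{2m−7}y^{2m−7}(x+y)²(x−y)²`, equals `(2m−3)(4m−8)/(4m−7)`, and is `> 2m−4`. -/
theorem barycenter_Omega2_AIII_two_m (m : ℕ) (hm : 4 ≤ m) :
    let Ω : Set (ℝ × ℝ) := convexHull ℝ
      {((0 : ℝ), (0 : ℝ)), ((m : ℝ), (m : ℝ) - 3), ((m : ℝ) - 3 / 2, (m : ℝ) - 3 / 2)}
    let P : ℝ × ℝ → ℝ := fun p =>
      4 * p.1 ^ (2 * m - 7) * p.2 ^ (2 * m - 7) * (p.1 + p.2) ^ 2 * (p.1 - p.2) ^ 2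
    (∫ p in Ω, (p.1 + p.2) * P p) / (∫ p in Ω, P p) =
        (2 * (m : ℝ) - 3) * (4 * (m : ℝ) - 8) / (4 * (m : ℝ) - 7) ∧
      2 * (m : ℝ) - 4 < (2 * (m : ℝ) - 3) * (4 * (m : ℝ) - 8) / (4 * (m : ℝ) - 7) := by
  intro Ω P
  have hm' : (4 : ℝ) ≤ m := by exact_mod_cast hm
  have hΩ : Ω = convexHull ℝ
      {0, ((m : ℝ), (2 * m - 3 : ℝ) - m), ((m : ℝ) - 3 / 2, (2 * m - 3 : ℝ) - (m - 3 / 2))} := by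
    rw [show (2 * m - 3 : ℝ) - m = m - 3 by ring,
      show (2 * m - 3 : ℝ) - (m - 3 / 2) = m - 3 / 2 by ring]
    rfl
  have hdeg : (((2 * (2 * m - 7) + 4 : ℕ) : ℝ)) = 4 * m - 10 := by
    push_cast [Nat.cast_sub (by omega : 7 ≤ 2 * m)]
    ring
  have hbary := barycenter_sum_convexHull_cone_of_homogeneous (2 * (2 * m - 7) + 4)
    (fun s _ => dhDensity_smul (2 * m - 7) s) (c := 2 * m - 3) (t₀ := m - 3 / 2) (t₁ := m)
    (by linarith) (by linarith)
    (integral_dhDensity_line_pos _ (by linarith) (by linarith) (by linarith)).ne'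
  rw [← hΩ, hdeg] at hbary
  refine ⟨hbary.trans (by ring), ?_⟩
  rw [lt_div_iff₀ (by linarith)]
  nlinarith
end

section
/- Let Δ₅ ⊂ ℝ² be the convex hull of (0,0), (5,0), (5,2), (7/2,7/2) and let P₅(x,y) = 4·x³·y³·(x+y)²·(x−y)². Then ∫_{Δ₅} P₅(x,y) dxdy = 391880669/360. -/
/-!
Δ₅ is the polygon `0 ≤ x ≤ 5, 0 ≤ y ≤ min x (7 - x)`. By Fubini, integrating P₅ in `y` first
gives `x⁷t⁴ - 4/3 x⁵t⁶ + 1/2 x³t⁸` at `t = min x (7 - x)`, which is a polynomial in `x` on each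
of `[0, 7/2]` and `[7/2, 5]`; these two integrals are evaluated by the fundamental theorem of
calculus.
-/

open MeasureTheory Set

theorem add_smul_add_smul_mem_convexHull {E : Type*} [AddCommGroup E] [Module ℝ E] {s : Set E}
    {a b c : E} (ha : a ∈ s) (hb : b ∈ s) (hc : c ∈ s) {α β γ : ℝ} (hα : 0 ≤ α) (hβ : 0 ≤ β)
    (hγ : 0 ≤ γ) (hαβγ : α + β + γ = 1) : α • a + β • b + γ • c ∈ convexHull ℝ s := by
  have := (convex_convexHull ℝ s).sum_mem (t := Finset.univ) (w := ![α, β, γ]) (z := ![a, b, c])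
    (by simp [Fin.forall_fin_succ, hα, hβ, hγ]) (by simp [Fin.sum_univ_three, hαβγ])
    (by simpa [Fin.forall_fin_succ] using
      ⟨subset_convexHull ℝ s ha, subset_convexHull ℝ s hb, subset_convexHull ℝ s hc⟩)
  simpa [Fin.sum_univ_three] using this

theorem convexHull_Delta5 :
    convexHull ℝ {((0 : ℝ), (0 : ℝ)), (5, 0), (5, 2), (7 / 2, 7 / 2)} =
      {p : ℝ × ℝ | p.1 ∈ Icc 0 5 ∧ p.2 ∈ Icc 0 (min p.1 (7 - p.1))} := by
  refine le_antisymm (convexHull_min ?_ ?_) ?_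
  · rintro p (rfl | rfl | rfl | rfl) <;> norm_num
  · intro p hp q hq a b ha hb hab
    simp only [mem_ofPred_eq, mem_Icc, le_min_iff, Prod.fst_add, Prod.snd_add, Prod.smul_fst,
      Prod.smul_snd, smul_eq_mul] at hp hq ⊢
    refine ⟨⟨?_, ?_⟩, ?_, ?_, ?_⟩ <;> nlinarith
  -- Δ₅ is the union of the triangles (0,0),(5,0),(5,2) and (0,0),(5,2),(7/2,7/2)
  -- on either side of the diagonal 5y = 2x.
  · rintro ⟨x, y⟩ ⟨⟨hx₀, hx₅⟩, hy₀, hy⟩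
    rw [le_min_iff] at hy
    obtain ⟨hyx, hy₇⟩ := hy
    by_cases hxy : 5 * y ≤ 2 * x
    · rw [show (x, y) = (1 - x / 5) • ((0 : ℝ), (0 : ℝ)) + (x / 5 - y / 2) • ((5 : ℝ), (0 : ℝ)) +
          (y / 2) • ((5 : ℝ), (2 : ℝ)) by
          simp only [Prod.smul_mk, Prod.mk_add_mk, smul_eq_mul, Prod.mk.injEq]
          constructor <;> ring]
      exact add_smul_add_smul_mem_convexHull (by simp) (by simp) (by simp)
        (by linarith) (by linarith) (by linarith) (by ring)
    · rw [show (x, y) = (1 - (x + y) / 7) • ((0 : ℝ), (0 : ℝ)) + ((x - y) / 3) • ((5 : ℝ), (2 : ℝ)) +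
          ((10 * y - 4 * x) / 21) • ((7 / 2 : ℝ), (7 / 2 : ℝ)) by
          simp only [Prod.smul_mk, Prod.mk_add_mk, smul_eq_mul, Prod.mk.injEq]
          constructor <;> ring]
      exact add_smul_add_smul_mem_convexHull (by simp) (by simp) (by simp)
        (by linarith) (by linarith) (by linarith) (by ring)

theorem setIntegral_region_Icc_graph {α E : Type*} [MeasurableSpace α] [NormedAddCommGroup E]
    [NormedSpace ℝ E] {μ : Measure α} {ν : Measure ℝ} [SFinite μ] [SFinite ν] {s : Set α}
    (hs : MeasurableSet s) {g₁ g₂ : α → ℝ} (hg₁ : Measurable g₁) (hg₂ : Measurable g₂)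
    {f : α × ℝ → E} (hf : IntegrableOn f {p | p.1 ∈ s ∧ p.2 ∈ Icc (g₁ p.1) (g₂ p.1)} (μ.prod ν)) :
    ∫ p in {p | p.1 ∈ s ∧ p.2 ∈ Icc (g₁ p.1) (g₂ p.1)}, f p ∂(μ.prod ν) =
      ∫ x in s, ∫ y in Icc (g₁ x) (g₂ x), f (x, y) ∂ν ∂μ := by
  have hmeas : MeasurableSet {p : α × ℝ | p.1 ∈ s ∧ p.2 ∈ Icc (g₁ p.1) (g₂ p.1)} :=
    (hs.preimage measurable_fst).inter
      ((measurableSet_le (hg₁.comp measurable_fst) measurable_snd).inter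
        (measurableSet_le measurable_snd (hg₂.comp measurable_fst)))
  rw [← integral_indicator hmeas, integral_prod _ ((integrable_indicator_iff hmeas).2 hf),
    ← integral_indicator hs]
  congr 1
  ext x
  by_cases hx : x ∈ s
  · rw [indicator_of_mem hx, ← integral_indicator measurableSet_Icc]
    congr 1
    ext y
    simp [indicator, hx]
  · simp [indicator, hx]

theorem integral_fiber (x t : ℝ) :
    ∫ y in (0 : ℝ)..t, 4 * x ^ 3 * y ^ 3 * (x + y) ^ 2 * (x - y) ^ 2 =
      x ^ 7 * t ^ 4 - 4 / 3 * x ^ 5 * t ^ 6 + 1 / 2 * x ^ 3 * t ^ 8 := by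
  rw [intervalIntegral.integral_deriv_eq_sub'
    (fun y ↦ x ^ 7 * y ^ 4 - 4 / 3 * x ^ 5 * y ^ 6 + 1 / 2 * x ^ 3 * y ^ 8)
    (by ext y; simp (disch := fun_prop); ring) (fun _ _ ↦ by fun_prop) (by fun_prop)]
  ring

theorem integral_fiber_left :
    ∫ x in (0 : ℝ)..7 / 2, (x ^ 7 * min x (7 - x) ^ 4 - 4 / 3 * x ^ 5 * min x (7 - x) ^ 6 +
      1 / 2 * x ^ 3 * min x (7 - x) ^ 8) = 13841287201 / 294912 := by
  rw [intervalIntegral.integral_congr (g := fun x ↦ x ^ 11 / 6) fun x hx ↦ by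
      rw [uIcc_of_le (by norm_num), mem_Icc] at hx
      simp only [min_eq_left (by linarith : x ≤ 7 - x)]
      ring,
    intervalIntegral.integral_deriv_eq_sub' (fun x ↦ x ^ 12 / 72)
      (by ext x; simp (disch := fun_prop); ring) (fun _ _ ↦ by fun_prop) (by fun_prop)]
  norm_num

theorem integral_fiber_right :
    ∫ x in (7 / 2 : ℝ)..5, (x ^ 7 * min x (7 - x) ^ 4 - 4 / 3 * x ^ 5 * min x (7 - x) ^ 6 +
      1 / 2 * x ^ 3 * min x (7 - x) ^ 8) = 170659642691 / 163840 := by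
  rw [intervalIntegral.integral_congr (g := fun x ↦
      x ^ 7 * (7 - x) ^ 4 - 4 / 3 * x ^ 5 * (7 - x) ^ 6 + 1 / 2 * x ^ 3 * (7 - x) ^ 8)
      fun x hx ↦ by
        rw [uIcc_of_le (by norm_num), mem_Icc] at hx
        simp only [min_eq_right (by linarith : 7 - x ≤ x)],
    intervalIntegral.integral_deriv_eq_sub' (fun x ↦ 5764801 / 8 * x ^ 4 - 3294172 / 5 * x ^ 5 +
      4470662 / 18 * x ^ 6 - 336140 / 7 * x ^ 7 + 4802 * x ^ 8 - 5488 / 27 * x ^ 9 + x ^ 12 / 72)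
      (by ext x; simp (disch := fun_prop); ring) (fun _ _ ↦ by fun_prop) (by fun_prop)]
  norm_num

/-- The Duistermaat–Heckman volume of the moment polytope `Δ₅` of the wonderful
compactification `X₅` of the symmetric space of type AIII(2,5):
`∫_{Δ₅} 4x³y³(x+y)²(x−y)² dxdy = 391880669/360`. -/
theorem volume_Delta5 :
    let Δ : Set (ℝ × ℝ) := convexHull ℝ
      {((0 : ℝ), (0 : ℝ)), (5, 0), (5, 2), (7 / 2, 7 / 2)}
    let P : ℝ × ℝ → ℝ := fun p =>
      4 * p.1 ^ 3 * p.2 ^ 3 * (p.1 + p.2) ^ 2 * (p.1 - p.2) ^ 2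
    (∫ p in Δ, P p) = 391880669 / 360 := by
  intro Δ P
  have hP : IntegrableOn P Δ :=
    (by fun_prop : Continuous P).continuousOn.integrableOn_compact
      ((toFinite _).isCompact_convexHull ℝ)
  rw [show Δ = _ from convexHull_Delta5, Measure.volume_eq_prod] at hP ⊢
  have hfiber : ∀ x ∈ Icc (0 : ℝ) 5, ∫ y in Icc 0 (min x (7 - x)), P (x, y) =
      x ^ 7 * min x (7 - x) ^ 4 - 4 / 3 * x ^ 5 * min x (7 - x) ^ 6 +
        1 / 2 * x ^ 3 * min x (7 - x) ^ 8 := fun x hx ↦ by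
    rw [integral_Icc_eq_integral_Ioc,
      ← intervalIntegral.integral_of_le (le_min hx.1 (by linarith [hx.2])), integral_fiber]
  have hcont : Continuous fun x : ℝ ↦ x ^ 7 * min x (7 - x) ^ 4 -
      4 / 3 * x ^ 5 * min x (7 - x) ^ 6 + 1 / 2 * x ^ 3 * min x (7 - x) ^ 8 := by fun_prop
  rw [setIntegral_region_Icc_graph (g₁ := fun _ ↦ 0) (g₂ := fun x ↦ min x (7 - x))
      measurableSet_Icc measurable_const (by fun_prop) hP,
    setIntegral_congr_fun measurableSet_Icc hfiber, integral_Icc_eq_integral_Ioc,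
    ← intervalIntegral.integral_of_le (by norm_num),
    ← intervalIntegral.integral_add_adjacent_intervals (b := 7 / 2)
      (hcont.intervalIntegrable _ _) (hcont.intervalIntegrable _ _),
    integral_fiber_left, integral_fiber_right]
  norm_num
end

section
/- Let Δ₆ ⊂ ℝ² be the convex hull of (0,0), (6,0), (6,3), (9/2,9/2) and let P₆(x,y) = 4·x⁵·y⁵·(x+y)²·(x−y)². Then (∫_{Δ₆} x·P₆ dxdy)/(∫_{Δ₆} P₆ dxdy) = 421619272419/78063549568 and (∫_{Δ₆} y·P₆ dxdy)/(∫_{Δ₆} P₆ dxdy) = 226450079005/78063549568; in particular the first quantity is greater than 5 and the sum of the two quantities is greater than 8. -/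
/-!
Over `0 ≤ x ≤ 6` the polygon `Δ₆` is the region `0 ≤ y ≤ min x (9 - x)`, so by Fubini each
moment `∫_{Δ₆} xⁱ yʲ` equals `(∫₀^{9/2} x^{i+j+1} + ∫_{9/2}^6 xⁱ (9 - x)^{j+1}) / (j + 1)`, an explicit
rational once `(9 - x)^{j+1}` is expanded binomially. As `P₆ = 4 (x⁹y⁵ - 2x⁷y⁷ + x⁵y⁹)`, the
integrals of `P₆`, `x P₆` and `y P₆` are combinations of nine such moments.
-/

open MeasureTheory Set

theorem Convex.smul_add_smul_add_smul_mem {𝕜 E : Type*} [Field 𝕜] [LinearOrder 𝕜]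
    [IsStrictOrderedRing 𝕜] [AddCommGroup E] [Module 𝕜 E] {s : Set E}
    (hs : Convex 𝕜 s) {x y z : E} (hx : x ∈ s) (hy : y ∈ s) (hz : z ∈ s) {a b c : 𝕜}
    (ha : 0 ≤ a) (hb : 0 ≤ b) (hc : 0 ≤ c) (habc : a + b + c = 1) :
    a • x + b • y + c • z ∈ s := by
  have h := hs.sum_mem (t := Finset.univ) (w := ![a, b, c]) (z := ![x, y, z])
    (by simp [Fin.forall_fin_succ, ha, hb, hc]) (by simp [Fin.sum_univ_three, habc])
    (by simp [Fin.forall_fin_succ, hx, hy, hz])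
  simpa [Fin.sum_univ_three] using h

theorem setIntegral_region_between_cc {α E : Type*} [MeasurableSpace α] {μ : Measure α}
    [SFinite μ] [NormedAddCommGroup E] [NormedSpace ℝ E] {f g : α → ℝ} {s : Set α}
    (hf : Measurable f) (hg : Measurable g) (hs : MeasurableSet s) (hfg : ∀ x ∈ s, f x ≤ g x)
    {F : α × ℝ → E}
    (hF : IntegrableOn F {p | p.1 ∈ s ∧ p.2 ∈ Icc (f p.1) (g p.1)} (μ.prod volume)) :
    ∫ p in {p : α × ℝ | p.1 ∈ s ∧ p.2 ∈ Icc (f p.1) (g p.1)}, F p ∂(μ.prod volume) =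
      ∫ x in s, (∫ y in f x..g x, F (x, y)) ∂μ := by
  have hR := measurableSet_region_between_cc hf hg hs
  rw [← integral_indicator hR, integral_prod _ (hF.integrable_indicator hR),
    ← integral_indicator hs]
  congr 1 with x
  by_cases hx : x ∈ s
  · rw [indicator_of_mem hx, intervalIntegral.integral_of_le (hfg x hx),
      ← integral_Icc_eq_integral_Ioc, ← integral_indicator measurableSet_Icc]
    congr 1 with y
    simp only [indicator, mem_ofPred_eq, hx, true_and]
  · simp [indicator, hx]

theorem integral_pow_mul_const_sub_pow (a b c : ℝ) (i n : ℕ) :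
    ∫ x in a..b, x ^ i * (c - x) ^ n =
      ∑ k ∈ Finset.range (n + 1), n.choose k * c ^ (n - k) * (-1) ^ k *
        ((b ^ (i + k + 1) - a ^ (i + k + 1)) / (i + k + 1)) := by
  have expand : ∀ x : ℝ, x ^ i * (c - x) ^ n =
      ∑ k ∈ Finset.range (n + 1), n.choose k * c ^ (n - k) * (-1) ^ k * x ^ (i + k) := by
    intro x
    rw [sub_eq_neg_add, add_pow, Finset.mul_sum]
    refine Finset.sum_congr rfl fun k _ => ?_
    rw [neg_pow, pow_add]
    ring
  simp_rw [expand]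
  rw [intervalIntegral.integral_finsetSum fun k _ =>
    (by fun_prop : Continuous _).intervalIntegrable _ _]
  refine Finset.sum_congr rfl fun k _ => ?_
  rw [intervalIntegral.integral_const_mul, integral_pow]
  push_cast
  ring

def Delta6 : Set (ℝ × ℝ) := convexHull ℝ {((0 : ℝ), (0 : ℝ)), (6, 0), (6, 3), (9 / 2, 9 / 2)}

theorem Delta6_eq_region :
    Delta6 = {p : ℝ × ℝ | p.1 ∈ Icc 0 6 ∧ p.2 ∈ Icc 0 (min p.1 (9 - p.1))} := by
  refine Subset.antisymm (convexHull_min ?_ ?_) ?_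
  · rintro p hp
    simp only [mem_insert_iff, mem_singleton_iff] at hp
    rcases hp with rfl | rfl | rfl | rfl <;> norm_num
  · rintro ⟨x, y⟩ ⟨⟨hx0, hx6⟩, hy0, hy⟩ ⟨x', y'⟩ ⟨⟨hx0', hx6'⟩, hy0', hy'⟩ a b ha hb hab
    simp only [le_min_iff, mem_Icc, mem_ofPred_eq, Prod.smul_mk, Prod.mk_add_mk, smul_eq_mul] at *
    refine ⟨⟨by positivity, ?_⟩, by positivity, ?_, ?_⟩ <;> nlinarith
  · rintro ⟨x, y⟩ ⟨⟨hx0, hx6⟩, hy0, hy⟩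
    rw [le_min_iff] at hy
    have hconv : Convex ℝ Delta6 := convex_convexHull ℝ _
    have hA : ((0 : ℝ), (0 : ℝ)) ∈ Delta6 := subset_convexHull ℝ _ (by simp)
    have hB : ((6 : ℝ), (0 : ℝ)) ∈ Delta6 := subset_convexHull ℝ _ (by simp)
    have hC : ((6 : ℝ), (3 : ℝ)) ∈ Delta6 := subset_convexHull ℝ _ (by simp)
    have hD : ((9 / 2 : ℝ), (9 / 2 : ℝ)) ∈ Delta6 := subset_convexHull ℝ _ (by simp)
    -- the diagonal x = 2y cuts Δ₆ into the triangles (0,0),(6,0),(6,3) and (0,0),(6,3),(9/2,9/2)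
    rcases le_or_gt (2 * y) x with h | h
    · convert hconv.smul_add_smul_add_smul_mem hA hB hC (a := 1 - x / 6) (b := x / 6 - y / 3)
        (c := y / 3) (by linarith) (by linarith) (by linarith) (by ring) using 1
      ext <;> simp only [Prod.smul_mk, smul_eq_mul, Prod.mk_add_mk] <;> ring
    · convert hconv.smul_add_smul_add_smul_mem hA hC hD (a := 1 - (x + y) / 9) (b := (x - y) / 3)
        (c := 4 * y / 9 - 2 * x / 9) (by linarith) (by linarith) (by linarith) (by ring) using 1
      ext <;> simp only [Prod.smul_mk, smul_eq_mul, Prod.mk_add_mk] <;> ring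

theorem isCompact_Delta6 : IsCompact Delta6 := (toFinite _).isCompact_convexHull (𝕜 := ℝ)

noncomputable def delta6Moment (i j : ℕ) : ℝ :=
  ((9 / 2 : ℝ) ^ (i + j + 2) / (i + j + 2) +
    ∑ k ∈ Finset.range (j + 2), ((j + 1).choose k : ℝ) * 9 ^ (j + 1 - k) * (-1) ^ k *
      ((6 ^ (i + k + 1) - (9 / 2) ^ (i + k + 1)) / (i + k + 1))) / (j + 1)

theorem setIntegral_monomial_Delta6 (i j : ℕ) :
    ∫ p in Delta6, p.1 ^ i * p.2 ^ j = delta6Moment i j := by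
  have hF : IntegrableOn (fun p : ℝ × ℝ => p.1 ^ i * p.2 ^ j) Delta6 :=
    (by fun_prop : Continuous fun p : ℝ × ℝ => p.1 ^ i * p.2 ^ j).continuousOn.integrableOn_compact
      isCompact_Delta6
  rw [Delta6_eq_region, Measure.volume_eq_prod] at hF ⊢
  rw [setIntegral_region_between_cc (f := fun _ => 0) measurable_const (by fun_prop)
    measurableSet_Icc (fun x hx => le_min hx.1 (by linarith [hx.2])) hF, integral_Icc_eq_integral_Ioc,
    ← intervalIntegral.integral_of_le (by norm_num)]
  simp only [intervalIntegral.integral_const_mul, integral_pow, zero_pow j.succ_ne_zero, sub_zero]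
  have hcont : Continuous fun x : ℝ => x ^ i * (min x (9 - x) ^ (j + 1) / (j + 1)) := by fun_prop
  rw [← intervalIntegral.integral_add_adjacent_intervals (b := 9 / 2) (hcont.intervalIntegrable _ _)
    (hcont.intervalIntegrable _ _)]
  have hleft : EqOn (fun x : ℝ => x ^ i * (min x (9 - x) ^ (j + 1) / (j + 1)))
      (fun x => x ^ (i + j + 1) / (j + 1)) (uIcc 0 (9 / 2)) := by
    rintro x ⟨-, hx⟩
    norm_num at hx
    dsimp only
    rw [min_eq_left (by linarith)]
    ring
  have hright : EqOn (fun x : ℝ => x ^ i * (min x (9 - x) ^ (j + 1) / (j + 1)))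
      (fun x => x ^ i * (9 - x) ^ (j + 1) / (j + 1)) (uIcc (9 / 2) 6) := by
    rintro x ⟨hx, -⟩
    norm_num at hx
    dsimp only
    rw [min_eq_right (by linarith)]
    ring
  rw [intervalIntegral.integral_congr hleft, intervalIntegral.integral_congr hright,
    intervalIntegral.integral_div, intervalIntegral.integral_div, integral_pow,
    integral_pow_mul_const_sub_pow, delta6Moment]
  push_cast
  ring

def dhDensity6 (p : ℝ × ℝ) : ℝ := 4 * p.1 ^ 5 * p.2 ^ 5 * (p.1 + p.2) ^ 2 * (p.1 - p.2) ^ 2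

theorem setIntegral_monomial_mul_dhDensity6 {K : Set (ℝ × ℝ)} (hK : IsCompact K) (i j : ℕ) :
    ∫ p in K, p.1 ^ i * p.2 ^ j * dhDensity6 p =
      4 * ((∫ p in K, p.1 ^ (i + 9) * p.2 ^ (j + 5)) - 2 * (∫ p in K, p.1 ^ (i + 7) * p.2 ^ (j + 7))
        + ∫ p in K, p.1 ^ (i + 5) * p.2 ^ (j + 9)) := by
  have hmono : ∀ k l : ℕ, IntegrableOn (fun p : ℝ × ℝ => p.1 ^ k * p.2 ^ l) K := fun k l =>
    (by fun_prop : Continuous fun p : ℝ × ℝ => p.1 ^ k * p.2 ^ l).continuousOn.integrableOn_compact hK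
  have hexpand : ∀ p : ℝ × ℝ, p.1 ^ i * p.2 ^ j * dhDensity6 p =
      4 * (p.1 ^ (i + 9) * p.2 ^ (j + 5) - 2 * (p.1 ^ (i + 7) * p.2 ^ (j + 7))
        + p.1 ^ (i + 5) * p.2 ^ (j + 9)) := fun p => by
    rw [dhDensity6]; ring
  simp_rw [hexpand]
  rw [integral_const_mul, integral_add (f := fun p : ℝ × ℝ =>
      p.1 ^ (i + 9) * p.2 ^ (j + 5) - 2 * (p.1 ^ (i + 7) * p.2 ^ (j + 7)))
    ((hmono _ _).sub ((hmono _ _).const_mul 2)) (hmono _ _),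
    integral_sub (hmono _ _) ((hmono _ _).const_mul 2), integral_const_mul]

theorem setIntegral_dhDensity6_Delta6 :
    ∫ p in Delta6, dhDensity6 p = 514764068401251 / 160160 := by
  have h := setIntegral_monomial_mul_dhDensity6 isCompact_Delta6 0 0
  simp only [pow_zero, one_mul, setIntegral_monomial_Delta6] at h
  rw [h]
  norm_num [delta6Moment, Finset.sum_range_succ, Nat.choose]

theorem setIntegral_fst_mul_dhDensity6_Delta6 :
    ∫ p in Delta6, p.1 * dhDensity6 p = 6049775729347896033 / 348508160 := by
  have h := setIntegral_monomial_mul_dhDensity6 isCompact_Delta6 1 0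
  simp only [pow_one, pow_zero, mul_one, setIntegral_monomial_Delta6] at h
  rw [h]
  norm_num [delta6Moment, Finset.sum_range_succ, Nat.choose]

theorem setIntegral_snd_mul_dhDensity6_Delta6 :
    ∫ p in Delta6, p.2 * dhDensity6 p = 649862224757079507 / 69701632 := by
  have h := setIntegral_monomial_mul_dhDensity6 isCompact_Delta6 0 1
  simp only [pow_one, pow_zero, one_mul, setIntegral_monomial_Delta6] at h
  rw [h]
  norm_num [delta6Moment, Finset.sum_range_succ, Nat.choose]

/-- The barycenter of the moment polytope `Δ₆` of `X₆` with respect to the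
Duistermaat–Heckman measure is `(421619272419/78063549568, 226450079005/78063549568)`;
in particular `x̄ > 5` and `x̄ + ȳ > 8`. -/
theorem barycenter_Delta6 :
    let Δ : Set (ℝ × ℝ) := convexHull ℝ
      {((0 : ℝ), (0 : ℝ)), (6, 0), (6, 3), (9 / 2, 9 / 2)}
    let P : ℝ × ℝ → ℝ := fun p =>
      4 * p.1 ^ 5 * p.2 ^ 5 * (p.1 + p.2) ^ 2 * (p.1 - p.2) ^ 2
    let xbar : ℝ := (∫ p in Δ, p.1 * P p) / (∫ p in Δ, P p)
    let ybar : ℝ := (∫ p in Δ, p.2 * P p) / (∫ p in Δ, P p)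
    xbar = 421619272419 / 78063549568 ∧ ybar = 226450079005 / 78063549568 ∧
      5 < xbar ∧ 8 < xbar + ybar := by
  intro Δ P xbar ybar
  have hx : xbar = 421619272419 / 78063549568 := by
    change (∫ p in Delta6, p.1 * dhDensity6 p) / (∫ p in Delta6, dhDensity6 p) = _
    rw [setIntegral_fst_mul_dhDensity6_Delta6, setIntegral_dhDensity6_Delta6]
    norm_num
  have hy : ybar = 226450079005 / 78063549568 := by
    change (∫ p in Delta6, p.2 * dhDensity6 p) / (∫ p in Delta6, dhDensity6 p) = _
    rw [setIntegral_snd_mul_dhDensity6_Delta6, setIntegral_dhDensity6_Delta6]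
    norm_num
  refine ⟨hx, hy, ?_, ?_⟩ <;> norm_num [hx, hy]
end

section
/- Define the real polynomial p(m) = m(m−3)(−512m⁷ + 9024m⁶ − 62848m⁵ + 233160m⁴ − 507384m³ + 656100m² − 471420m + 145800) + (9/2)(2m−1)(2m−2)(2m−3)(2m−4)(2m−5)(2m−6)(2m−3)³. Then p is increasing on the interval [4, ∞) and p(4) > 0; in particular p(m) > 0 for all real m ≥ 4. -/
private lemma key310 (a b : ℝ) (ha : (4:ℝ) ≤ a) (hab : a < b) :
    a * (a - 3) *
        (-512 * a ^ 7 + 9024 * a ^ 6 - 62848 * a ^ 5 + 233160 * a ^ 4 - 507384 * a ^ 3 +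
          656100 * a ^ 2 - 471420 * a + 145800) +
      9 / 2 * ((2 * a - 1) * (2 * a - 2) * (2 * a - 3) * (2 * a - 4) * (2 * a - 5) *
        (2 * a - 6)) * (2 * a - 3) ^ 3 <
    b * (b - 3) *
        (-512 * b ^ 7 + 9024 * b ^ 6 - 62848 * b ^ 5 + 233160 * b ^ 4 - 507384 * b ^ 3 +
          656100 * b ^ 2 - 471420 * b + 145800) +
      9 / 2 * ((2 * b - 1) * (2 * b - 2) * (2 * b - 3) * (2 * b - 4) * (2 * b - 5) *
        (2 * b - 6)) * (2 * b - 3) ^ 3 := by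
  have hs : (0:ℝ) ≤ a - 4 := by linarith
  have hd : (0:ℝ) < b - a := by linarith
  have h : (b * (b - 3) *
        (-512 * b ^ 7 + 9024 * b ^ 6 - 62848 * b ^ 5 + 233160 * b ^ 4 - 507384 * b ^ 3 +
          656100 * b ^ 2 - 471420 * b + 145800) +
      9 / 2 * ((2 * b - 1) * (2 * b - 2) * (2 * b - 3) * (2 * b - 4) * (2 * b - 5) *
        (2 * b - 6)) * (2 * b - 3) ^ 3) -
      (a * (a - 3) *
        (-512 * a ^ 7 + 9024 * a ^ 6 - 62848 * a ^ 5 + 233160 * a ^ 4 - 507384 * a ^ 3 +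
          656100 * a ^ 2 - 471420 * a + 145800) +
      9 / 2 * ((2 * a - 1) * (2 * a - 2) * (2 * a - 3) * (2 * a - 4) * (2 * a - 5) *
        (2 * a - 6)) * (2 * a - 3) ^ 3) = 15110180 * (b - a) + 27504324 * (b - a) ^ 2 + 28593724 * (b - a) ^ 3 + 18740380 * (b - a) ^ 4 + 8036256 * (b - a) ^ 5 + 2255432 * (b - a) ^ 6 + 399488 * (b - a) ^ 7 + 40512 * (b - a) ^ 8 + 1792 * (b - a) ^ 9 + 55008648 * (a - 4) * (b - a) + 85781172 * (a - 4) * (b - a) ^ 2 + 74961520 * (a - 4) * (b - a) ^ 3 + 40181280 * (a - 4) * (b - a) ^ 4 + 13532592 * (a - 4) * (b - a) ^ 5 + 2796416 * (a - 4) * (b - a) ^ 6 + 324096 * (a - 4) * (b - a) ^ 7 + 16128 * (a - 4) * (b - a) ^ 8 + 85781172 * (a - 4) ^ 2 * (b - a) + 112442280 * (a - 4) ^ 2 * (b - a) ^ 2 + 80362560 * (a - 4) ^ 2 * (b - a) ^ 3 + 33831480 * (a - 4) ^ 2 * (b - a) ^ 4 + 8389248 * (a - 4) ^ 2 * (b -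 a) ^ 5 + 1134336 * (a - 4) ^ 2 * (b - a) ^ 6 + 64512 * (a - 4) ^ 2 * (b - a) ^ 7 + 74961520 * (a - 4) ^ 3 * (b - a) + 80362560 * (a - 4) ^ 3 * (b - a) ^ 2 + 45108640 * (a - 4) ^ 3 * (b - a) ^ 3 + 13982080 * (a - 4) ^ 3 * (b - a) ^ 4 + 2268672 * (a - 4) ^ 3 * (b - a) ^ 5 + 150528 * (a - 4) ^ 3 * (b - a) ^ 6 + 40181280 * (a - 4) ^ 4 * (b - a) + 33831480 * (a - 4) ^ 4 * (b - a) ^ 2 + 13982080 * (a - 4) ^ 4 * (b - a) ^ 3 + 2835840 * (a - 4) ^ 4 * (b - a) ^ 4 + 225792 * (a - 4) ^ 4 * (b - a) ^ 5 + 13532592 * (a - 4) ^ 5 * (b - a) + 8389248 * (a - 4) ^ 5 * (b - a) ^ 2 + 2268672 * (a - 4) ^ 5 * (b - a) ^ 3 + 225792 * (a - 4) ^ 5 * (b - a) ^ 4 + 2796416 * (a - 4) ^ 6 * (b - a) + 1134336 * (a - 4) ^ 6 * (b - a) ^ 2 + 150528 * (a - 4) ^ 6 * (b - a) ^ 3 +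 324096 * (a - 4) ^ 7 * (b - a) + 64512 * (a - 4) ^ 7 * (b - a) ^ 2 + 16128 * (a - 4) ^ 8 * (b - a) := by ring
  linarith [hd, mul_nonneg (pow_nonneg hs 0) (pow_nonneg hd.le 1), mul_nonneg (pow_nonneg hs 0) (pow_nonneg hd.le 2), mul_nonneg (pow_nonneg hs 0) (pow_nonneg hd.le 3), mul_nonneg (pow_nonneg hs 0) (pow_nonneg hd.le 4), mul_nonneg (pow_nonneg hs 0) (pow_nonneg hd.le 5), mul_nonneg (pow_nonneg hs 0) (pow_nonneg hd.le 6), mul_nonneg (pow_nonneg hs 0) (pow_nonneg hd.le 7), mul_nonneg (pow_nonneg hs 0) (pow_nonneg hd.le 8), mul_nonneg (pow_nonneg hs 0) (pow_nonneg hd.le 9), mul_nonneg (pow_nonneg hs 1) (pow_nonneg hd.le 1), mul_nonneg (pow_nonneg hs 1) (pow_nonneg hd.le 2), mul_nonneg (pow_nonneg hs 1) (pow_nonneg hd.le 3), mul_nonneg (pow_nonneg hs 1) (pow_nonneg hd.le 4), mul_nonneg (pow_nonneg hs 1) (pow_nonneg hd.le 5), mul_nonneg (pow_nonneg hs 1)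 (pow_nonneg hd.le 6), mul_nonneg (pow_nonneg hs 1) (pow_nonneg hd.le 7), mul_nonneg (pow_nonneg hs 1) (pow_nonneg hd.le 8), mul_nonneg (pow_nonneg hs 2) (pow_nonneg hd.le 1), mul_nonneg (pow_nonneg hs 2) (pow_nonneg hd.le 2), mul_nonneg (pow_nonneg hs 2) (pow_nonneg hd.le 3), mul_nonneg (pow_nonneg hs 2) (pow_nonneg hd.le 4), mul_nonneg (pow_nonneg hs 2) (pow_nonneg hd.le 5), mul_nonneg (pow_nonneg hs 2) (pow_nonneg hd.le 6), mul_nonneg (pow_nonneg hs 2) (pow_nonneg hd.le 7), mul_nonneg (pow_nonneg hs 3) (pow_nonneg hd.le 1), mul_nonneg (pow_nonneg hs 3) (pow_nonneg hd.le 2), mul_nonneg (pow_nonneg hs 3) (pow_nonneg hd.le 3), mul_nonneg (pow_nonneg hs 3) (pow_nonneg hd.le 4), mul_nonneg (pow_nonneg hs 3) (pow_nonneg hd.le 5), mul_nonneg (pow_nonneg hs 3) (pow_nonneg hd.le 6), mul_nonneg (pow_nonneg hs 4) (pow_nonneg hd.le 1), mul_nonneg (pow_nonneg hs 4) (pow_nonneg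 hd.le 2), mul_nonneg (pow_nonneg hs 4) (pow_nonneg hd.le 3), mul_nonneg (pow_nonneg hs 4) (pow_nonneg hd.le 4), mul_nonneg (pow_nonneg hs 4) (pow_nonneg hd.le 5), mul_nonneg (pow_nonneg hs 5) (pow_nonneg hd.le 1), mul_nonneg (pow_nonneg hs 5) (pow_nonneg hd.le 2), mul_nonneg (pow_nonneg hs 5) (pow_nonneg hd.le 3), mul_nonneg (pow_nonneg hs 5) (pow_nonneg hd.le 4), mul_nonneg (pow_nonneg hs 6) (pow_nonneg hd.le 1), mul_nonneg (pow_nonneg hs 6) (pow_nonneg hd.le 2), mul_nonneg (pow_nonneg hs 6) (pow_nonneg hd.le 3), mul_nonneg (pow_nonneg hs 7) (pow_nonneg hd.le 1), mul_nonneg (pow_nonneg hs 7) (pow_nonneg hd.le 2), mul_nonneg (pow_nonneg hs 8) (pow_nonneg hd.le 1)]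

/-- The degree-9 polynomial `p(m)` from the proof of Lemma 3.10 is increasing on
`[4, ∞)` and `p(4) > 0`; in particular `p(m) > 0` for all real `m ≥ 4`. -/
theorem polynomial_positivity_lemma310 :
    let p : ℝ → ℝ := fun m =>
      m * (m - 3) *
        (-512 * m ^ 7 + 9024 * m ^ 6 - 62848 * m ^ 5 + 233160 * m ^ 4 - 507384 * m ^ 3 +
          656100 * m ^ 2 - 471420 * m + 145800) +
      9 / 2 * ((2 * m - 1) * (2 * m - 2) * (2 * m - 3) * (2 * m - 4) * (2 * m - 5) *
        (2 * m - 6)) * (2 * m - 3) ^ 3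
    StrictMonoOn p (Set.Ici (4 : ℝ)) ∧ 0 < p 4 ∧ ∀ m : ℝ, 4 ≤ m → 0 < p m := by
  intro p
  have hmono : StrictMonoOn p (Set.Ici (4 : ℝ)) := by
    intro a ha b _ hab
    exact key310 a b ha hab
  have h4 : p 4 = 3600792 := by norm_num [p]
  refine ⟨hmono, by rw [h4]; norm_num, fun m hm => ?_⟩
  rcases eq_or_lt_of_le hm with h | h
  · rw [← h, h4]; norm_num
  · have := hmono Set.self_mem_Ici (le_of_lt h) h
    rw [h4] at this; linarith
end

section
/- Define the real polynomial R(m) = (m−4)²·(−5888m⁷ + 82112m⁶ − 491008m⁵ + 1637752m⁴ − 3300288m³ + 4031616m² − 2774016m + 829440) + (2m−1)(2m−2)(2m−3)(2m−4)(2m−5)(2m−6) · [ (3m−4)·( e^{5/2}·((19/8)m² − (1837/240)m + 5929/960) + e^{−2/19}·(−(99/8)m² + (11453/240)m − 44201/960) ) + (e^{5/2}/6)·(2m−3)³ ]. Then R is decreasing on the interval [42, ∞) and R(42) < 0; in particular R(m) < 0 for all real m ≥ 42. -/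
set_option maxHeartbeats 4000000 in
/-- The degree-9 polynomial expression `R(m)` (with coefficients involving `e^{5/2}` and
`e^{−2/19}`) from the proof of Proposition 4.3 is decreasing on `[42, ∞)` and `R(42) < 0`;
in particular `R(m) < 0` for all real `m ≥ 42`. -/
theorem polynomial_negativity_prop43 :
    let R : ℝ → ℝ := fun m =>
      (m - 4) ^ 2 *
        (-5888 * m ^ 7 + 82112 * m ^ 6 - 491008 * m ^ 5 + 1637752 * m ^ 4 -
          3300288 * m ^ 3 + 4031616 * m ^ 2 - 2774016 * m + 829440) +
      (2 * m - 1) * (2 * m - 2) * (2 * m - 3) * (2 * m - 4) * (2 * m - 5) * (2 * m - 6) *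
        ((3 * m - 4) *
          (Real.exp (5 / 2) * (19 / 8 * m ^ 2 - 1837 / 240 * m + 5929 / 960) +
            Real.exp (-(2 / 19)) * (-(99 / 8) * m ^ 2 + 11453 / 240 * m - 44201 / 960)) +
          Real.exp (5 / 2) / 6 * (2 * m - 3) ^ 3)
    StrictAntiOn R (Set.Ici (42 : ℝ)) ∧ R 42 < 0 ∧ ∀ m : ℝ, 42 ≤ m → R m < 0 := by
  intro R
  have hRdef : R = (fun m : ℝ =>
      (m - 4) ^ 2 *
        (-5888 * m ^ 7 + 82112 * m ^ 6 - 491008 * m ^ 5 + 1637752 * m ^ 4 -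
          3300288 * m ^ 3 + 4031616 * m ^ 2 - 2774016 * m + 829440) +
      (2 * m - 1) * (2 * m - 2) * (2 * m - 3) * (2 * m - 4) * (2 * m - 5) * (2 * m - 6) *
        ((3 * m - 4) *
          (Real.exp (5 / 2) * (19 / 8 * m ^ 2 - 1837 / 240 * m + 5929 / 960) +
            Real.exp (-(2 / 19)) * (-(99 / 8) * m ^ 2 + 11453 / 240 * m - 44201 / 960)) +
          Real.exp (5 / 2) / 6 * (2 * m - 3) ^ 3)) := rfl
  -- bounds on the exponentials
  have hApos : (0:ℝ) < Real.exp (5/2) := Real.exp_pos _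
  have hA : Real.exp (5/2) < 1219/100 := by
    have h2 : Real.exp (5/2) ^ 2 = Real.exp 1 ^ 5 := by
      rw [← Real.exp_nat_mul, ← Real.exp_nat_mul]; norm_num
    have he : Real.exp 1 ^ 5 < (1219/100:ℝ) ^ 2 := by
      have h5 : Real.exp 1 ^ 5 < 2.7182818286 ^ 5 := by
        gcongr
        exact Real.exp_one_lt_d9
      have : (2.7182818286:ℝ) ^ 5 < (1219/100) ^ 2 := by norm_num
      linarith
    have : Real.exp (5/2) ^ 2 < (1219/100:ℝ) ^ 2 := by rw [h2]; exact he
    exact lt_of_pow_lt_pow_left₀ 2 (by norm_num) this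
  have hB : (9/10:ℝ) < Real.exp (-(2/19)) := by
    have hkey : Real.exp (2/19) < 10/9 := by
      have h2 : Real.exp (2/19) ^ 19 = Real.exp 1 ^ 2 := by
        rw [← Real.exp_nat_mul, ← Real.exp_nat_mul]; norm_num
      have he : Real.exp 1 ^ 2 < (10/9:ℝ) ^ 19 := by
        have h5 : Real.exp 1 ^ 2 < 2.7182818286 ^ 2 := by
          gcongr
          exact Real.exp_one_lt_d9
        have : (2.7182818286:ℝ) ^ 2 < (10/9) ^ 19 := by norm_num
        linarith
      have : Real.exp (2/19) ^ 19 < (10/9:ℝ) ^ 19 := by rw [h2]; exact he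
      exact lt_of_pow_lt_pow_left₀ 19 (by norm_num) this
    have : Real.exp (-(2/19)) = (Real.exp (2/19))⁻¹ := Real.exp_neg _
    rw [this]
    rw [lt_inv_comm₀ (by norm_num) (Real.exp_pos _)]
    calc Real.exp (2/19) < 10/9 := hkey
      _ = ((9:ℝ)/10)⁻¹ := by norm_num
  -- the expanded form of R
  have hRg : R = (fun m : ℝ => (13271040 + (-51019776) * m ^ 1 + 87527424 * m ^ 2 + (-87831552) * m ^ 3 + 56637952 * m ^ 4 + (-24258432) * m ^ 5 + 6879608 * m ^ 6 + (-1242112) * m ^ 7 + 129216 * m ^ 8 + (-5888) * m ^ 9) + Real.exp (5/2) * ((-21027) + 2897931/20 * m ^ 1 + (-50704571/120) * m ^ 2 + 20736443/30 * m ^ 3 + (-84402773/120) * m ^ 4 + 9270709/20 * m ^ 5 + (-5951171/30) * m ^ 6 + 266257/5 * m ^ 7 + (-40728/5) * m ^ 8 + 1624/3 * m ^ 9) + Real.exp (-(2/19)) * (132603 + (-17732859/20) * m ^ 1 + 299501179/120 * m ^ 2 + (-117798787/30) * m ^ 3 + 459933397/120 * m ^ 4 + (-145140863/60) * m ^ 5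 + 29718979/30 * m ^ 6 + (-3817139/15) * m ^ 7 + 186392/5 * m ^ 8 + (-2376) * m ^ 9)) := by
    rw [hRdef]; funext m; ring
  -- derivative
  have hderiv : ∀ x : ℝ, HasDerivAt R
      (((-51019776) + 175054848 * x ^ 1 + (-263494656) * x ^ 2 + 226551808 * x ^ 3 + (-121292160) * x ^ 4 + 41277648 * x ^ 5 + (-8694784) * x ^ 6 + 1033728 * x ^ 7 + (-52992) * x ^ 8) + Real.exp (5/2) * (2897931/20 + (-50704571/60) * x ^ 1 + 20736443/10 * x ^ 2 + (-84402773/30) * x ^ 3 + 9270709/4 * x ^ 4 + (-5951171/5) * x ^ 5 + 1863799/5 * x ^ 6 + (-325824/5) * x ^ 7 + 4872 * x ^ 8) + Real.exp (-(2/19)) * ((-17732859/20) + 299501179/60 * x ^ 1 + (-117798787/10) * x ^ 2 + 459933397/30 * x ^ 3 + (-145140863/12) * x ^ 4 + 29718979/5 * x ^ 5 + (-26719973/15) * x ^ 6 + 1491136/5 * x ^ 7 + (-21384) * x ^ 8)) x := by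
    intro x
    rw [hRg]
    have HP := ((((((((((hasDerivAt_const x (13271040:ℝ)).add ((hasDerivAt_pow 1 x).const_mul ((-51019776):ℝ))).add ((hasDerivAt_pow 2 x).const_mul (87527424:ℝ))).add ((hasDerivAt_pow 3 x).const_mul ((-87831552):ℝ))).add ((hasDerivAt_pow 4 x).const_mul (56637952:ℝ))).add ((hasDerivAt_pow 5 x).const_mul ((-24258432):ℝ))).add ((hasDerivAt_pow 6 x).const_mul (6879608:ℝ))).add ((hasDerivAt_pow 7 x).const_mul ((-1242112):ℝ))).add ((hasDerivAt_pow 8 x).const_mul (129216:ℝ))).add ((hasDerivAt_pow 9 x).const_mul ((-5888):ℝ)))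
    have HQ1 := ((((((((((hasDerivAt_const x ((-21027):ℝ)).add ((hasDerivAt_pow 1 x).const_mul (2897931/20:ℝ))).add ((hasDerivAt_pow 2 x).const_mul ((-50704571/120):ℝ))).add ((hasDerivAt_pow 3 x).const_mul (20736443/30:ℝ))).add ((hasDerivAt_pow 4 x).const_mul ((-84402773/120):ℝ))).add ((hasDerivAt_pow 5 x).const_mul (9270709/20:ℝ))).add ((hasDerivAt_pow 6 x).const_mul ((-5951171/30):ℝ))).add ((hasDerivAt_pow 7 x).const_mul (266257/5:ℝ))).add ((hasDerivAt_pow 8 x).const_mul ((-40728/5):ℝ))).add ((hasDerivAt_pow 9 x).const_mul (1624/3:ℝ)))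
    have HQ2 := ((((((((((hasDerivAt_const x (132603:ℝ)).add ((hasDerivAt_pow 1 x).const_mul ((-17732859/20):ℝ))).add ((hasDerivAt_pow 2 x).const_mul (299501179/120:ℝ))).add ((hasDerivAt_pow 3 x).const_mul ((-117798787/30):ℝ))).add ((hasDerivAt_pow 4 x).const_mul (459933397/120:ℝ))).add ((hasDerivAt_pow 5 x).const_mul ((-145140863/60):ℝ))).add ((hasDerivAt_pow 6 x).const_mul (29718979/30:ℝ))).add ((hasDerivAt_pow 7 x).const_mul ((-3817139/15):ℝ))).add ((hasDerivAt_pow 8 x).const_mul (186392/5:ℝ))).add ((hasDerivAt_pow 9 x).const_mul ((-2376):ℝ)))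
    exact ((HP.add (HQ1.const_mul (Real.exp (5/2)))).add (HQ2.const_mul (Real.exp (-(2/19))))).congr_deriv
      (by push_cast; ring)
  -- negativity of the derivative on (42, ∞)
  have hderivneg : ∀ x : ℝ, 42 ≤ x →
      (((-51019776) + 175054848 * x ^ 1 + (-263494656) * x ^ 2 + 226551808 * x ^ 3 + (-121292160) * x ^ 4 + 41277648 * x ^ 5 + (-8694784) * x ^ 6 + 1033728 * x ^ 7 + (-52992) * x ^ 8) + Real.exp (5/2) * (2897931/20 + (-50704571/60) * x ^ 1 + 20736443/10 * x ^ 2 + (-84402773/30) * x ^ 3 + 9270709/4 * x ^ 4 + (-5951171/5) * x ^ 5 + 1863799/5 * x ^ 6 + (-325824/5) * x ^ 7 + 4872 * x ^ 8) + Real.exp (-(2/19)) * ((-17732859/20) + 299501179/60 * x ^ 1 + (-117798787/10) * x ^ 2 + 459933397/30 * x ^ 3 + (-145140863/12) * x ^ 4 + 29718979/5 * x ^ 5 + (-26719973/15) * x ^ 6 + 1491136/5 * x ^ 7 + (-21384) * x ^ 8)) < 0 := by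
    intro x hx
    have ht : (0:ℝ) ≤ x - 42 := by linarith
    have hQ1' : (0:ℝ) ≤ (2897931/20 + (-50704571/60) * x ^ 1 + 20736443/10 * x ^ 2 + (-84402773/30) * x ^ 3 + 9270709/4 * x ^ 4 + (-5951171/5) * x ^ 5 + 1863799/5 * x ^ 6 + (-325824/5) * x ^ 7 + 4872 * x ^ 8) := by nlinarith [pow_nonneg ht 2, pow_nonneg ht 3, pow_nonneg ht 4, pow_nonneg ht 5, pow_nonneg ht 6, pow_nonneg ht 7, pow_nonneg ht 8]
    have hQ2' : ((-17732859/20) + 299501179/60 * x ^ 1 + (-117798787/10) * x ^ 2 + 459933397/30 * x ^ 3 + (-145140863/12) * x ^ 4 + 29718979/5 * x ^ 5 + (-26719973/15) * x ^ 6 + 1491136/5 * x ^ 7 + (-21384) * x ^ 8) ≤ 0 := by nlinarith [pow_nonneg ht 2, pow_nonneg ht 3, pow_nonneg ht 4, pow_nonneg ht 5, pow_nonneg ht 6, pow_nonneg ht 7, pow_nonneg ht 8]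
    have hcomb : ((-51019776) + 175054848 * x ^ 1 + (-263494656) * x ^ 2 + 226551808 * x ^ 3 + (-121292160) * x ^ 4 + 41277648 * x ^ 5 + (-8694784) * x ^ 6 + 1033728 * x ^ 7 + (-52992) * x ^ 8) + (1219/100:ℝ) * (2897931/20 + (-50704571/60) * x ^ 1 + 20736443/10 * x ^ 2 + (-84402773/30) * x ^ 3 + 9270709/4 * x ^ 4 + (-5951171/5) * x ^ 5 + 1863799/5 * x ^ 6 + (-325824/5) * x ^ 7 + 4872 * x ^ 8) + (9/10:ℝ) * ((-17732859/20) + 299501179/60 * x ^ 1 + (-117798787/10) * x ^ 2 + 459933397/30 * x ^ 3 + (-145140863/12) * x ^ 4 + 29718979/5 * x ^ 5 + (-26719973/15) * x ^ 6 + 1491136/5 * x ^ 7 + (-21384) * x ^ 8) < 0 := by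
      nlinarith [pow_nonneg ht 2, pow_nonneg ht 3, pow_nonneg ht 4, pow_nonneg ht 5, pow_nonneg ht 6, pow_nonneg ht 7, pow_nonneg ht 8]
    have h1 : Real.exp (5/2) * (2897931/20 + (-50704571/60) * x ^ 1 + 20736443/10 * x ^ 2 + (-84402773/30) * x ^ 3 + 9270709/4 * x ^ 4 + (-5951171/5) * x ^ 5 + 1863799/5 * x ^ 6 + (-325824/5) * x ^ 7 + 4872 * x ^ 8) ≤ (1219/100:ℝ) * (2897931/20 + (-50704571/60) * x ^ 1 + 20736443/10 * x ^ 2 + (-84402773/30) * x ^ 3 + 9270709/4 * x ^ 4 + (-5951171/5) * x ^ 5 + 1863799/5 * x ^ 6 + (-325824/5) * x ^ 7 + 4872 * x ^ 8) :=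
      mul_le_mul_of_nonneg_right hA.le hQ1'
    have h2 : Real.exp (-(2/19)) * ((-17732859/20) + 299501179/60 * x ^ 1 + (-117798787/10) * x ^ 2 + 459933397/30 * x ^ 3 + (-145140863/12) * x ^ 4 + 29718979/5 * x ^ 5 + (-26719973/15) * x ^ 6 + 1491136/5 * x ^ 7 + (-21384) * x ^ 8) ≤ (9/10:ℝ) * ((-17732859/20) + 299501179/60 * x ^ 1 + (-117798787/10) * x ^ 2 + 459933397/30 * x ^ 3 + (-145140863/12) * x ^ 4 + 29718979/5 * x ^ 5 + (-26719973/15) * x ^ 6 + 1491136/5 * x ^ 7 + (-21384) * x ^ 8) :=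
      mul_le_mul_of_nonpos_right hB.le hQ2'
    linarith
  have hanti : StrictAntiOn R (Set.Ici (42:ℝ)) := by
    apply strictAntiOn_of_deriv_neg (convex_Ici _)
    · exact fun x _ => ((hderiv x).continuousAt).continuousWithinAt
    · intro x hx
      rw [interior_Ici] at hx
      rw [(hderiv x).deriv]
      exact hderivneg x (le_of_lt hx)
  have h42 : R 42 < 0 := by
    have e42 : R 42 = ((-1394921312608854528):ℝ) + Real.exp (5/2) * (152519877580301946:ℝ) + Real.exp (-(2/19)) * ((-658831035949847514):ℝ) := by
      rw [hRg]; norm_num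
    rw [e42]
    nlinarith [hA, hB, hApos]
  refine ⟨hanti, h42, fun m hm => ?_⟩
  rcases eq_or_lt_of_le hm with h | h
  · rw [← h]; exact h42
  · have := hanti (Set.self_mem_Ici) (Set.mem_Ici.mpr hm) h
    linarith
end
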